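/- arXiv:2402.10025 — 12 statements merged into one kernel-verified Lean document; each statement's English description precedes it below -/
import Mathlib

section
/- If the box B(n^k) is good, then the independence number of the k-th strong power of the complement of the cycle C_{2n+1} is at least 2^k + 1. -/
namespace Paper

/-- `near a b` means `|a - b| = 1`. -/
def near (a b : ℕ) : Prop := a = b + 1 ∨ b = a + 1

/-- membership in the box `B(n₁,…,n_k) = [2n₁] × ⋯ × [2n_k]`. -/
def inBox {k : ℕ} (n : Fin k → ℕ) (x : Fin k → ℕ) : Prop :=
  ∀ i, 1 ≤ x i ∧ x i ≤ 2 * n i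

/-- membership in the boundary `∂B(n₁,…,n_k)`. -/
def onBoundary {k : ℕ} (n : Fin k → ℕ) (x : Fin k → ℕ) : Prop :=
  inBox n x ∧ ∃ i, x i = 1 ∨ x i = 2 * n i

/-- the relation `x ∼ y`: `x = y` or `|xᵢ - yᵢ| = 1` for some `i`. -/
def sim {k : ℕ} (x y : Fin k → ℕ) : Prop := x = y ∨ ∃ i, near (x i) (y i)

/-- `S` is a skeleton of the box `B(n₁,…,n_k)`. -/
def IsSkeleton {k : ℕ} (n : Fin k → ℕ) (S : Finset (Fin k → ℕ)) : Prop :=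
  (∀ x ∈ S, onBoundary n x) ∧ S.card = 2 ^ k ∧ ∀ x ∈ S, ∀ y ∈ S, sim x y

/-- the box `B(n₁,…,n_k)` is good. -/
def Good {k : ℕ} (n : Fin k → ℕ) : Prop := ∃ S, IsSkeleton n S

end Paper
namespace Paper

/-- an independent set in a simple graph. -/
def IsIndep {V : Type*} (G : SimpleGraph V) (s : Set V) : Prop :=
  ∀ x ∈ s, ∀ y ∈ s, ¬ G.Adj x y

/-- the independence number of a simple graph. -/
noncomputable def indepNum {V : Type*} (G : SimpleGraph V) : ℕ :=
  sSup {m | ∃ s : Finset V, IsIndep G ↑s ∧ s.card = m}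

/-- the `k`-th strong power of a simple graph. -/
def strongPow {V : Type*} (G : SimpleGraph V) (k : ℕ) : SimpleGraph (Fin k → V) where
  Adj x y := x ≠ y ∧ ∀ i, x i = y i ∨ G.Adj (x i) (y i)
  symm := ⟨fun x y h => ⟨h.1.symm, fun i => (h.2 i).imp Eq.symm (fun h' => h'.symm)⟩⟩
  loopless := ⟨fun x h => h.1 rfl⟩

/-- the Shannon capacity `Θ(G) = sup_k α(G^{⊠k})^{1/k}`. -/
noncomputable def shannonCapacity {V : Type*} (G : SimpleGraph V) : ℝ :=
  ⨆ k : ℕ+, (indepNum (strongPow G k) : ℝ) ^ ((k : ℝ)⁻¹)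

/-- the complement of the odd cycle `C_{2n+1}`, on vertex set `ZMod (2n+1)`:
`i` and `j` are adjacent iff `i ≠ j` and `i - j ≢ ±1`. -/
def cycleCompl (n : ℕ) : SimpleGraph (ZMod (2 * n + 1)) where
  Adj i j := i ≠ j ∧ i - j ≠ 1 ∧ j - i ≠ 1
  symm := ⟨fun i j h => ⟨h.1.symm, h.2.2, h.2.1⟩⟩
  loopless := ⟨fun i h => h.1 rfl⟩

end Paper
open Paper in
theorem stmt_1 (n k : ℕ) (hn : 1 ≤ n) (h : Good (fun _ : Fin k => n)) :
    2 ^ k + 1 ≤ indepNum (strongPow (cycleCompl n) k) := by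

  classical
  obtain ⟨S, hSb, hScard, hSsim⟩ := h
  haveI : Fact (1 < 2*n+1) := ⟨by omega⟩
  set f : (Fin k → ℕ) → (Fin k → ZMod (2*n+1)) := fun x i => (x i : ZMod (2*n+1)) with hf
  -- basic cast facts
  have hcast_ne : ∀ a : ℕ, 1 ≤ a → a ≤ 2*n → (a : ZMod (2*n+1)) ≠ 0 := by
    intro a h1 h2 hc
    rw [ZMod.natCast_eq_zero_iff] at hc
    have := Nat.le_of_dvd (by omega) hc
    omega
  have h2n : ((2*n : ℕ) : ZMod (2*n+1)) = -1 := by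
    have h0 : ((2*n+1 : ℕ) : ZMod (2*n+1)) = 0 := ZMod.natCast_self _
    push_cast at h0 ⊢
    linear_combination h0
  -- near points map to different, nonadjacent vertices
  have hnear : ∀ a b : ℕ, near a b →
      (a : ZMod (2*n+1)) ≠ (b : ZMod (2*n+1)) ∧
      ¬ (cycleCompl n).Adj (a : ZMod (2*n+1)) (b : ZMod (2*n+1)) := by
    intro a b hab
    rcases hab with rfl | rfl
    · constructor
      · intro hc; push_cast at hc
        exact one_ne_zero (α := ZMod (2*n+1)) (by linear_combination hc)
      · intro hadj
        exact hadj.2.1 (by push_cast; ring)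
    · constructor
      · intro hc; push_cast at hc
        exact one_ne_zero (α := ZMod (2*n+1)) (by linear_combination -hc)
      · intro hadj
        exact hadj.2.2 (by push_cast; ring)
  -- injectivity of f on S
  have hinj : Set.InjOn f ↑S := by
    intro x hx y hy hxy
    by_contra hne
    rcases hSsim x hx y hy with rfl | ⟨i, hi⟩
    · exact hne rfl
    · exact (hnear _ _ hi).1 (congrFun hxy i)
  -- the independent set
  set s : Finset (Fin k → ZMod (2*n+1)) := S.image f ∪ {fun _ => 0} with hs
  have hzero_notin : (fun _ : Fin k => (0 : ZMod (2*n+1))) ∉ S.image f := by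
    intro hmem
    rcases Finset.mem_image.mp hmem with ⟨x, hx, hfx⟩
    obtain ⟨hbox, i, hi⟩ := hSb x hx
    have hxi : ((x i : ℕ) : ZMod (2*n+1)) = 0 := congrFun hfx i
    exact hcast_ne (x i) (hbox i).1 (hbox i).2 hxi
  have hcard : s.card = 2^k + 1 := by
    rw [hs, Finset.card_union_of_disjoint (by simp [hzero_notin]),
      Finset.card_image_of_injOn hinj, hScard, Finset.card_singleton]
  -- nonadjacency of a skeleton image with the zero vector
  have hz : ∀ x ∈ S, ¬ (strongPow (cycleCompl n) k).Adj (f x) (fun _ => 0) := by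
    intro x hx hadj
    obtain ⟨hbox, i, hi⟩ := hSb x hx
    rcases hadj.2 i with hc | hc
    · rcases hi with h1 | h1
      · rw [show f x i = ((x i : ℕ) : ZMod (2*n+1)) from rfl, h1] at hc
        exact one_ne_zero (by push_cast at hc; exact hc)
      · rw [show f x i = ((x i : ℕ) : ZMod (2*n+1)) from rfl, h1, h2n] at hc
        exact one_ne_zero (α := ZMod (2*n+1)) (by linear_combination -hc)
    · rcases hi with h1 | h1
      · apply hc.2.1
        rw [show f x i = ((x i : ℕ) : ZMod (2*n+1)) from rfl, h1]
        push_cast; ring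
      · apply hc.2.2
        rw [show f x i = ((x i : ℕ) : ZMod (2*n+1)) from rfl, h1, h2n]
        ring
  have hindep : IsIndep (strongPow (cycleCompl n) k) ↑s := by
    intro a ha b hb hadj
    have hane : a ≠ b := hadj.1
    simp only [hs, Finset.coe_union, Set.mem_union, Finset.coe_image, Set.mem_image,
      Finset.coe_singleton, Set.mem_singleton_iff, Finset.mem_coe] at ha hb
    rcases ha with ⟨x, hx, rfl⟩ | rfl
    · rcases hb with ⟨y, hy, rfl⟩ | rfl
      · have hxy : x ≠ y := fun e => hane (by rw [e])
        rcases hSsim x hx y hy with e | ⟨i, hi⟩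
        · exact hxy e
        · rcases hadj.2 i with hc | hc
          · exact (hnear _ _ hi).1 hc
          · exact (hnear _ _ hi).2 hc
      · exact hz x hx hadj
    · rcases hb with ⟨y, hy, rfl⟩ | rfl
      · exact hz y hy ((strongPow (cycleCompl n) k).adj_symm hadj)
      · exact hane rfl
  -- conclude
  have hmem : 2^k + 1 ∈ {m | ∃ s : Finset (Fin k → ZMod (2*n+1)),
      IsIndep (strongPow (cycleCompl n) k) ↑s ∧ s.card = m} := ⟨s, hindep, hcard⟩
  apply le_csSup _ hmem
  refine ⟨Fintype.card (Fin k → ZMod (2*n+1)), ?_⟩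
  rintro m ⟨t, _, rfl⟩
  exact Finset.card_le_univ t
end

section
/- If the box B(n_1, n_2, ..., n_k) is good and n_1 > 1, then the box B(n_1 - 1, n_2, ..., n_k) is good. -/
open Paper in
theorem stmt_2 {k : ℕ} (n : Fin (k + 1) → ℕ) (hpos : ∀ i, 1 ≤ n i)
    (h1 : 1 < n 0) (hg : Good n) :
    Good (Function.update n 0 (n 0 - 1)) := by
  classical
  obtain ⟨S, hSb, hScard, hSsim⟩ := hg
  set m := n 0 with hm
  set f : (Fin (k+1) → ℕ) → (Fin (k+1) → ℕ) :=
    fun x => if 2*m - 1 ≤ x 0 then Function.update x 0 (x 0 - 2) else x with hf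
  have hfi : ∀ x (i : Fin (k+1)), i ≠ 0 → f x i = x i := by
    intro x i hi
    simp only [hf]
    split_ifs with h
    · rw [Function.update_of_ne hi]
    · rfl
  have hf0 : ∀ x, f x 0 = if 2*m - 1 ≤ x 0 then x 0 - 2 else x 0 := by
    intro x
    simp only [hf]
    split_ifs with h
    · rw [Function.update_self]
    · rfl
  -- injectivity on S
  have hinj : Set.InjOn f S := by
    intro x hx y hy hxy
    have hsim := hSsim x hx y hy
    funext i
    by_cases hi : i = 0
    · subst hi
      have h0 : f x 0 = f y 0 := by rw [hxy]
      rw [hf0, hf0] at h0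
      have hbx := (hSb x hx).1 0
      have hby := (hSb y hy).1 0
      -- key: if the shifted values collide but originals differ by 2,
      -- then x and y differ only in coord 0 by exactly 2, contradicting sim
      by_contra hne
      have hdiff2 : x 0 = y 0 + 2 ∨ y 0 = x 0 + 2 := by
        split_ifs at h0 <;> omega
      -- all other coordinates agree
      have hothers : ∀ j : Fin (k+1), j ≠ 0 → x j = y j := by
        intro j hj
        have := congrFun hxy j
        rwa [hfi x j hj, hfi y j hj] at this
      rcases hsim with heq | ⟨i, hnear⟩
      · exact hne (congrFun heq 0)
      · by_cases hi0 : i = 0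
        · subst hi0
          rcases hnear with h | h <;> omega
        · have := hothers i hi0
          rcases hnear with h | h <;> omega
    · have := congrFun hxy i
      rwa [hfi x i hi, hfi y i hi] at this
  refine ⟨S.image f, ?_, ?_, ?_⟩
  · -- boundary
    intro z hz
    obtain ⟨x, hx, rfl⟩ := Finset.mem_image.mp hz
    obtain ⟨hbox, i, hi⟩ := hSb x hx
    constructor
    · intro j
      by_cases hj : j = 0
      · subst hj
        rw [hf0, Function.update_self]
        have := hbox 0
        split_ifs <;> omega
      · rw [hfi x j hj, Function.update_of_ne hj]
        exact hbox j
    · by_cases hi0 : i = 0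
      · subst hi0
        refine ⟨0, ?_⟩
        rw [hf0, Function.update_self]
        rcases hi with h | h
        · left
          have : ¬ 2*m - 1 ≤ x 0 := by omega
          rw [if_neg this]; exact h
        · right
          have : 2*m - 1 ≤ x 0 := by omega
          rw [if_pos this]; omega
      · refine ⟨i, ?_⟩
        rw [hfi x i hi0, Function.update_of_ne hi0]
        exact hi
  · -- card
    rw [Finset.card_image_of_injOn hinj, hScard]
  · -- pairwise sim
    intro z hz w hw
    obtain ⟨x, hx, rfl⟩ := Finset.mem_image.mp hz
    obtain ⟨y, hy, rfl⟩ := Finset.mem_image.mp hw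
    rcases hSsim x hx y hy with heq | ⟨i, hnear⟩
    · left; rw [heq]
    · by_cases hi0 : i = 0
      · subst hi0
        right
        refine ⟨0, ?_⟩
        rw [hf0, hf0]
        have hbx := (hSb x hx).1 0
        have hby := (hSb y hy).1 0
        unfold near at hnear ⊢
        split_ifs <;> omega
      · right
        refine ⟨i, ?_⟩
        rw [hfi x i hi0, hfi y i hi0]
        exact hnear
end

section
/- The map φ : B(n_1,...,n_k) → B(n_1-1,...,n_k) given by φ(x) = x if x_1 ≤ 2(n_1-1) and φ(x) = (x_1 - 2, x_2,...,x_k) otherwise maps any skeleton of B(n_1,...,n_k) injectively onto a skeleton of B(n_1-1, n_2,...,n_k), whenever n_1 > 1. -/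
open Paper in
theorem stmt_3 {k : ℕ} (n : Fin (k + 1) → ℕ) (hpos : ∀ i, 1 ≤ n i) (h1 : 1 < n 0)
    (S : Finset (Fin (k + 1) → ℕ)) (hS : IsSkeleton n S)
    (φ : (Fin (k + 1) → ℕ) → (Fin (k + 1) → ℕ))
    (hφ : ∀ x, φ x = if x 0 ≤ 2 * (n 0 - 1) then x else Function.update x 0 (x 0 - 2)) :
    Set.InjOn φ ↑S ∧ IsSkeleton (Function.update n 0 (n 0 - 1)) (S.image φ) := by
  obtain ⟨hbd, hcard, hsim⟩ := hS
  have hne : ∀ x (i : Fin (k+1)), i ≠ 0 → φ x i = x i := by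
    intro x i hi
    rw [hφ]
    split
    · rfl
    · exact Function.update_of_ne hi _ _
  have h0 : ∀ x : Fin (k+1) → ℕ,
      (x 0 ≤ 2*(n 0 - 1) ∧ φ x 0 = x 0) ∨ (2*(n 0 - 1) < x 0 ∧ φ x 0 = x 0 - 2) := by
    intro x
    rw [hφ]
    by_cases h : x 0 ≤ 2*(n 0 - 1)
    · rw [if_pos h]; exact Or.inl ⟨h, rfl⟩
    · rw [if_neg h]; exact Or.inr ⟨Nat.lt_of_not_le h, Function.update_self _ _ _⟩
  have hinj : Set.InjOn φ ↑S := by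
    intro x hx y hy hxy
    rcases hsim x hx y hy with rfl | ⟨i, hi⟩
    · rfl
    exfalso
    unfold near at hi
    by_cases hi0 : i = 0
    · subst hi0
      have he : φ x 0 = φ y 0 := congrFun hxy 0
      rcases h0 x with ⟨hx1, hx2⟩ | ⟨hx1, hx2⟩ <;>
        rcases h0 y with ⟨hy1, hy2⟩ | ⟨hy1, hy2⟩ <;> omega
    · have he : φ x i = φ y i := congrFun hxy i
      rw [hne x i hi0, hne y i hi0] at he
      omega
  refine ⟨hinj, ?_, ?_, ?_⟩
  · intro y hy
    obtain ⟨x, hx, rfl⟩ := Finset.mem_image.1 hy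
    have hib := (hbd x hx).1
    constructor
    · intro i
      by_cases hi0 : i = 0
      · subst hi0
        rw [Function.update_self]
        have := hib 0
        rcases h0 x with ⟨h1', h2'⟩ | ⟨h1', h2'⟩ <;> omega
      · rw [hne x i hi0, Function.update_of_ne hi0]
        exact hib i
    · obtain ⟨i, hi⟩ := (hbd x hx).2
      by_cases hi0 : i = 0
      · subst hi0
        refine ⟨0, ?_⟩
        rw [Function.update_self]
        have := hib 0
        rcases h0 x with ⟨h1', h2'⟩ | ⟨h1', h2'⟩ <;> omega
      · exact ⟨i, by rw [hne x i hi0, Function.update_of_ne hi0]; exact hi⟩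
  · rw [Finset.card_image_of_injOn hinj, hcard]
  · intro a ha b hb
    obtain ⟨x, hx, rfl⟩ := Finset.mem_image.1 ha
    obtain ⟨y, hy, rfl⟩ := Finset.mem_image.1 hb
    rcases hsim x hx y hy with rfl | ⟨i, hi⟩
    · exact Or.inl rfl
    by_cases hi0 : i = 0
    · subst hi0
      refine Or.inr ⟨0, ?_⟩
      have hx0 := ((hbd x hx).1 0).1
      have hy0 := ((hbd y hy).1 0).1
      unfold near at hi ⊢
      rcases h0 x with ⟨h1', h2'⟩ | ⟨h1', h2'⟩ <;>
        rcases h0 y with ⟨h3', h4'⟩ | ⟨h3', h4'⟩ <;> omega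
    · exact Or.inr ⟨i, by rw [hne x i hi0, hne y i hi0]; exact hi⟩
end

section
/- If the box B(n_1, ..., n_k) is good and an (n_k; n', n'')-expansion exists, then the box B(n_1, ..., n_{k-1}, n', n'') is good. -/
namespace Paper

/-- the relation `∼` on pairs: equal, or differing by `1` in some coordinate. -/
def sim2 (u v : ℕ × ℕ) : Prop := u = v ∨ near u.1 v.1 ∨ near u.2 v.2

/-- `ψ` is an `(a; b, c)`-expansion. -/
def IsExpansion (a b c : ℕ) (ψ : ℕ × Fin 2 → ℕ × ℕ) : Prop :=
  (∀ x, 1 ≤ x → x ≤ 2 * a → ∀ i,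
    1 ≤ (ψ (x, i)).1 ∧ (ψ (x, i)).1 ≤ 2 * b ∧ 1 ≤ (ψ (x, i)).2 ∧ (ψ (x, i)).2 ≤ 2 * c) ∧
  (∀ x y, 1 ≤ x → x ≤ 2 * a → 1 ≤ y → y ≤ 2 * a → ∀ i j,
    ψ (x, i) = ψ (y, j) → x = y ∧ i = j) ∧
  (∀ x, (x = 1 ∨ x = 2 * a) → ∀ i,
    (ψ (x, i)).1 = 1 ∨ (ψ (x, i)).1 = 2 * b ∨ (ψ (x, i)).2 = 1 ∨ (ψ (x, i)).2 = 2 * c) ∧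
  (∀ x y, 1 ≤ x → x ≤ 2 * a → 1 ≤ y → y ≤ 2 * a → (x = y ∨ near x y) → ∀ i j,
    sim2 (ψ (x, i)) (ψ (y, j)))

end Paper
open Paper in
theorem stmt_4 {k : ℕ} (n : Fin (k + 1) → ℕ) (hpos : ∀ i, 1 ≤ n i)
    (b c : ℕ) (hb : 1 ≤ b) (hc : 1 ≤ c) (hg : Good n)
    (ψ : ℕ × Fin 2 → ℕ × ℕ) (hψ : IsExpansion (n (Fin.last k)) b c ψ) :
    Good (Fin.snoc (Fin.snoc (Fin.init n) b) c) := by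
  obtain ⟨S, hSb, hScard, hSsim⟩ := hg
  obtain ⟨h1, h2, h3, h4⟩ := hψ
  set a := n (Fin.last k) with ha
  set m : Fin (k+2) → ℕ := Fin.snoc (Fin.snoc (Fin.init n) b) c with hm
  set F : (Fin (k+1) → ℕ) → Fin 2 → (Fin (k+2) → ℕ) := fun x i =>
    Fin.snoc (Fin.snoc (Fin.init x) (ψ (x (Fin.last k), i)).1) (ψ (x (Fin.last k), i)).2
    with hF
  have hFlast : ∀ x i, F x i (Fin.last (k+1)) = (ψ (x (Fin.last k), i)).2 := by
    intro x i; simp [hF]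
  have hFpenult : ∀ x i, F x i ((Fin.last k).castSucc) = (ψ (x (Fin.last k), i)).1 := by
    intro x i; simp [hF]
  have hFinit : ∀ x i (j : Fin k), F x i (j.castSucc.castSucc) = x j.castSucc := by
    intro x i j; simp [hF, Fin.init]
  have hmlast : m (Fin.last (k+1)) = c := by simp [hm]
  have hmpenult : m ((Fin.last k).castSucc) = b := by simp [hm]
  have hminit : ∀ j : Fin k, m (j.castSucc.castSucc) = n j.castSucc := by
    intro j; simp [hm, Fin.init]
  -- box bounds for points of S
  have hxbox : ∀ x ∈ S, 1 ≤ x (Fin.last k) ∧ x (Fin.last k) ≤ 2 * a := by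
    intro x hx; exact (hSb x hx).1 (Fin.last k)
  refine ⟨(S ×ˢ (Finset.univ : Finset (Fin 2))).image (fun p => F p.1 p.2), ?_, ?_, ?_⟩
  · intro z hz
    simp only [Finset.mem_image, Finset.mem_product, Finset.mem_univ, and_true] at hz
    obtain ⟨⟨x, i⟩, hx, rfl⟩ := hz
    obtain ⟨hx1, hx2⟩ := hxbox x hx
    obtain ⟨hxB, jw, hjw⟩ := hSb x hx
    have hψbox := h1 (x (Fin.last k)) hx1 hx2 i
    constructor
    · intro j
      induction j using Fin.lastCases with
      | last => rw [hFlast, hmlast]; exact ⟨hψbox.2.2.1, hψbox.2.2.2⟩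
      | cast j =>
        induction j using Fin.lastCases with
        | last =>
          simp only [Fin.coe_eq_castSucc]
          rw [hFpenult, hmpenult]; exact ⟨hψbox.1, hψbox.2.1⟩
        | cast j =>
          simp only [Fin.coe_eq_castSucc]
          rw [hFinit, hminit]; exact hxB j.castSucc
    · -- boundary witness
      induction jw using Fin.lastCases with
      | last =>
        rcases h3 (x (Fin.last k)) hjw i with h | h | h | h
        · exact ⟨(Fin.last k).castSucc, Or.inl (by rw [hFpenult]; exact h)⟩
        · exact ⟨(Fin.last k).castSucc, Or.inr (by rw [hFpenult, hmpenult]; exact h)⟩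
        · exact ⟨Fin.last (k+1), Or.inl (by rw [hFlast]; exact h)⟩
        · exact ⟨Fin.last (k+1), Or.inr (by rw [hFlast, hmlast]; exact h)⟩
      | cast j =>
        refine ⟨j.castSucc.castSucc, ?_⟩
        rw [hFinit, hminit]; exact hjw
  · -- cardinality
    rw [Finset.card_image_of_injOn, Finset.card_product, hScard]
    · simp [pow_succ]
    · rintro ⟨x, i⟩ hx ⟨y, j⟩ hy hxy
      simp only [Finset.mem_coe, Finset.mem_product, Finset.mem_univ, and_true] at hx hy
      simp only [] at hxy
      have hinit : Fin.init x = Fin.init y := by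
        funext j'
        have := congrFun hxy (j'.castSucc.castSucc)
        rw [hFinit, hFinit] at this
        simpa [Fin.init] using this
      have hψeq : ψ (x (Fin.last k), i) = ψ (y (Fin.last k), j) := by
        have hp := congrFun hxy ((Fin.last k).castSucc)
        have hl := congrFun hxy (Fin.last (k+1))
        rw [hFpenult, hFpenult] at hp
        rw [hFlast, hFlast] at hl
        exact Prod.ext hp hl
      obtain ⟨hx1, hx2⟩ := hxbox x hx
      obtain ⟨hy1, hy2⟩ := hxbox y hy
      obtain ⟨hxe, hie⟩ := h2 _ _ hx1 hx2 hy1 hy2 i j hψeq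
      have : x = y := by
        funext j'
        induction j' using Fin.lastCases with
        | last => exact hxe
        | cast j' => exact congrFun hinit j'
      simp [this, hie]
  · -- pairwise sim
    intro z hz w hw
    simp only [Finset.mem_image, Finset.mem_product, Finset.mem_univ, and_true] at hz hw
    obtain ⟨⟨x, i⟩, hx, rfl⟩ := hz
    obtain ⟨⟨y, j⟩, hy, rfl⟩ := hw
    obtain ⟨hx1, hx2⟩ := hxbox x hx
    obtain ⟨hy1, hy2⟩ := hxbox y hy
    rcases hSsim x hx y hy with heq | ⟨jd, hjd⟩
    · -- x = y : use ψ sim with same point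
      subst heq
      rcases h4 _ _ hx1 hx2 hx1 hx2 (Or.inl rfl) i j with hpe | hn1 | hn2
      · left
        obtain ⟨hie1, hie2⟩ := h2 _ _ hx1 hx2 hx1 hx2 i j hpe
        simp [hie2]
      · exact Or.inr ⟨(Fin.last k).castSucc, by rw [hFpenult, hFpenult]; exact hn1⟩
      · exact Or.inr ⟨Fin.last (k+1), by rw [hFlast, hFlast]; exact hn2⟩
    · induction jd using Fin.lastCases with
      | last =>
        rcases h4 _ _ hx1 hx2 hy1 hy2 (Or.inr hjd) i j with hpe | hn1 | hn2
        · exfalso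
          obtain ⟨hxye, _⟩ := h2 _ _ hx1 hx2 hy1 hy2 i j hpe
          rcases hjd with h | h <;> omega
        · exact Or.inr ⟨(Fin.last k).castSucc, by rw [hFpenult, hFpenult]; exact hn1⟩
        · exact Or.inr ⟨Fin.last (k+1), by rw [hFlast, hFlast]; exact hn2⟩
      | cast jd =>
        refine Or.inr ⟨jd.castSucc.castSucc, ?_⟩
        rw [hFinit, hFinit]; exact hjd
end

section
/- If the box B(n_1,...,n_k) is good, then for any positive integer n_{k+1}, the box B(n_1,...,n_k, n_{k+1}) is good; in fact, if S is a skeleton of B(n_1,...,n_k), then S × {1,2} is a skeleton of B(n_1,...,n_k,n_{k+1}). -/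
open Paper in
theorem stmt_7_aux {k : ℕ} (n : Fin k → ℕ) (m : ℕ) (hm : 1 ≤ m)
    (S : Finset (Fin k → ℕ)) (hS : IsSkeleton n S) :
    IsSkeleton (Fin.snoc n m)
      ((S ×ˢ ({1, 2} : Finset ℕ)).image (fun p => Fin.snoc p.1 p.2)) := by
  obtain ⟨hbd, hcard, hsim⟩ := hS
  refine ⟨?_, ?_, ?_⟩
  · rintro x hx
    simp only [Finset.mem_image, Finset.mem_product, Finset.mem_insert,
      Finset.mem_singleton] at hx
    obtain ⟨⟨p, a⟩, ⟨hp, ha⟩, rfl⟩ := hx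
    obtain ⟨hin, i, hi⟩ := hbd p hp
    constructor
    · intro j
      refine Fin.lastCases ?_ ?_ j
      · simp only [Fin.snoc_last]
        rcases ha with rfl | rfl <;> omega
      · intro i'
        simpa using hin i'
    · exact ⟨i.castSucc, by simpa using hi⟩
  · rw [Finset.card_image_of_injOn, Finset.card_product, hcard]
    · simp [pow_succ]
    · intro p _ q _ h
      have h1 := congrFun h (Fin.last k)
      simp only [Fin.snoc_last] at h1
      have h2 : p.1 = q.1 := funext fun i => by
        have := congrFun h i.castSucc
        simpa using this
      exact Prod.ext h2 h1
  · rintro x hx y hy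
    simp only [Finset.mem_image] at hx hy
    obtain ⟨⟨p, a⟩, hp, rfl⟩ := hx
    obtain ⟨⟨q, b⟩, hq, rfl⟩ := hy
    simp only [Finset.mem_product, Finset.mem_insert, Finset.mem_singleton] at hp hq
    rcases hsim p hp.1 q hq.1 with rfl | ⟨i, hi⟩
    · by_cases hab : a = b
      · subst hab; exact Or.inl rfl
      · refine Or.inr ⟨Fin.last k, ?_⟩
        simp only [Fin.snoc_last, near]
        rcases hp.2 with rfl | rfl <;> rcases hq.2 with rfl | rfl <;> omega
    · exact Or.inr ⟨i.castSucc, by simpa using hi⟩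

open Paper in
theorem stmt_7 {k : ℕ} (n : Fin k → ℕ) (m : ℕ) (hm : 1 ≤ m) :
    (Good n → Good (Fin.snoc n m)) ∧
    (∀ S : Finset (Fin k → ℕ), IsSkeleton n S →
      IsSkeleton (Fin.snoc n m)
        ((S ×ˢ ({1, 2} : Finset ℕ)).image (fun p => Fin.snoc p.1 p.2))) := by
  constructor
  · rintro ⟨S, hS⟩
    exact ⟨_, stmt_7_aux n m hm S hS⟩
  · exact fun S hS => stmt_7_aux n m hm S hS
end

section
/- If the box B(n_1,...,n_k,n_{k+1}) is good and n_{k+1} > 2^k, then the box B(n_1,...,n_k) is good. -/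
open Paper

private lemma arith_near_mod (a b : ℕ) (hpar : a % 2 = b % 2) (hn : near a b) : False := by
  rcases hn with h | h <;> omega

private lemma arith_not_near_self (a : ℕ) (hn : near a a) : False := by
  rcases hn with h | h <;> omega

private lemma arith_shift (a b c : ℕ) (hac : a ≠ c) (hbc : b ≠ c)
    (hpar : (if a < c then a else a + 1) % 2 = (if b < c then b else b + 1) % 2)
    (hn : near a b) : False := by
  rcases hn with h | h <;> split_ifs at hpar <;> omega

private lemma arith_extreme (a c N : ℕ) (ha : a = 1 ∨ a = 2 * N)
    (hc1 : 1 ≤ c) (hc2 : c ≤ 2 * N) (hac : a ≠ c)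
    (hpar : (if a < c then a else a + 1) % 2 = 0) : False := by
  rcases ha with h | h <;> subst h <;> split_ifs at hpar <;> omega

private lemma aux_card_parity {k : ℕ} (T : Finset (Fin (k + 1) → ℕ))
    (h : ∀ x ∈ T, ∀ y ∈ T, x ≠ y → ∃ j : Fin k, near (x j.castSucc) (y j.castSucc)) :
    T.card ≤ 2 ^ k := by
  have hinj : Set.InjOn (fun x : Fin (k + 1) → ℕ => fun j : Fin k =>
      (⟨x j.castSucc % 2, Nat.mod_lt _ (by norm_num)⟩ : Fin 2)) T := by
    intro x hx y hy hxy
    by_contra hne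
    obtain ⟨j, hj⟩ := h x hx y hy hne
    have hval : x j.castSucc % 2 = y j.castSucc % 2 := by
      simpa using congrArg Fin.val (congrFun hxy j)
    exact arith_near_mod _ _ hval hj
  calc T.card ≤ (Finset.univ : Finset (Fin k → Fin 2)).card :=
        Finset.card_le_card_of_injOn _ (fun x _ => Finset.mem_univ _) hinj
    _ = 2 ^ k := by simp

open Paper in
theorem stmt_8 {k : ℕ} (n : Fin (k + 1) → ℕ) (hpos : ∀ i, 1 ≤ n i)
    (hg : Good n) (hlast : 2 ^ k < n (Fin.last k)) :
    Good (Fin.init n) := by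
  obtain ⟨S, hbd, hcard, hsim⟩ := hg
  -- there is a value c in [1, 2N] not attained as a last coordinate
  have himg : S.image (fun x => x (Fin.last k)) ⊆ Finset.Icc 1 (2 * n (Fin.last k)) := by
    intro v hv
    obtain ⟨x, hx, rfl⟩ := Finset.mem_image.1 hv
    exact Finset.mem_Icc.2 ((hbd x hx).1 (Fin.last k))
  have hpow : 2 ^ (k + 1) < 2 * n (Fin.last k) := by
    have h3 : 2 ^ (k + 1) = 2 * 2 ^ k := by ring
    omega
  have hIcc : (Finset.Icc 1 (2 * n (Fin.last k))).card = 2 * n (Fin.last k) := by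
    rw [Nat.card_Icc]; omega
  have hcardlt : (S.image (fun x => x (Fin.last k))).card
      < (Finset.Icc 1 (2 * n (Fin.last k))).card :=
    calc (S.image (fun x => x (Fin.last k))).card ≤ S.card := Finset.card_image_le
      _ = 2 ^ (k + 1) := hcard
      _ < 2 * n (Fin.last k) := hpow
      _ = (Finset.Icc 1 (2 * n (Fin.last k))).card := hIcc.symm
  obtain ⟨c, hcIcc, hcnot⟩ : ∃ c ∈ Finset.Icc 1 (2 * n (Fin.last k)),
      c ∉ S.image (fun x => x (Fin.last k)) := by
    by_contra hcon
    push_neg at hcon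
    exact absurd (Finset.card_le_card hcon) (not_le.2 hcardlt)
  obtain ⟨hc1, hc2⟩ := Finset.mem_Icc.1 hcIcc
  have hcS : ∀ x ∈ S, x (Fin.last k) ≠ c := fun x hx h =>
    hcnot (Finset.mem_image.2 ⟨x, hx, h⟩)
  clear hcnot hcIcc hcardlt himg
  -- the parity class A
  obtain ⟨A, hA⟩ : ∃ A, A = S.filter
      (fun x => (if x (Fin.last k) < c then x (Fin.last k) else x (Fin.last k) + 1) % 2 = 0) :=
    ⟨_, rfl⟩
  obtain ⟨B, hB⟩ : ∃ B, B = S.filter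
      (fun x => ¬ ((if x (Fin.last k) < c then x (Fin.last k) else x (Fin.last k) + 1) % 2 = 0)) :=
    ⟨_, rfl⟩
  -- two points in the same parity class are near in some earlier coordinate
  have keynear : ∀ x ∈ S, ∀ y ∈ S, x ≠ y →
      (if x (Fin.last k) < c then x (Fin.last k) else x (Fin.last k) + 1) % 2
        = (if y (Fin.last k) < c then y (Fin.last k) else y (Fin.last k) + 1) % 2 →
      ∃ j : Fin k, near (x j.castSucc) (y j.castSucc) := by
    intro x hx y hy hne hpar
    rcases hsim x hx y hy with h | ⟨i, hi⟩
    · exact absurd h hne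
    by_cases hik : (i : ℕ) < k
    · refine ⟨⟨i, hik⟩, ?_⟩
      have hcast : (⟨(i : ℕ), hik⟩ : Fin k).castSucc = i := by
        apply Fin.ext; rfl
      rw [hcast]; exact hi
    · exfalso
      have hil : i = Fin.last k := by
        apply Fin.ext
        have := i.isLt
        simp only [Fin.val_last]
        omega
      rw [hil] at hi
      exact arith_shift _ _ c (hcS x hx) (hcS y hy) hpar hi
  have hAS : ∀ x ∈ A, x ∈ S := by
    intro x hx; rw [hA, Finset.mem_filter] at hx; exact hx.1
  have hApar : ∀ x ∈ A,
      (if x (Fin.last k) < c then x (Fin.last k) else x (Fin.last k) + 1) % 2 = 0 := by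
    intro x hx; rw [hA, Finset.mem_filter] at hx; exact hx.2
  have keynearA : ∀ x ∈ A, ∀ y ∈ A, x ≠ y →
      ∃ j : Fin k, near (x j.castSucc) (y j.castSucc) := by
    intro x hx y hy hne
    exact keynear x (hAS x hx) y (hAS y hy) hne ((hApar x hx).trans (hApar y hy).symm)
  have cardA : A.card ≤ 2 ^ k := aux_card_parity A keynearA
  have cardB : B.card ≤ 2 ^ k := by
    refine aux_card_parity B ?_
    intro x hx y hy hne
    rw [hB, Finset.mem_filter] at hx hy
    refine keynear x hx.1 y hy.1 hne ?_
    have h1 := hx.2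
    have h2 := hy.2
    omega
  have cardAB : A.card + B.card = 2 ^ (k + 1) := by
    rw [hA, hB, Finset.card_filter_add_card_filter_not, hcard]
  have cardA' : A.card = 2 ^ k := by
    have h3 : 2 ^ (k + 1) = 2 ^ k + 2 ^ k := by ring
    omega
  -- points of A have non-extreme last coordinate
  have hAne : ∀ x ∈ A, ¬ (x (Fin.last k) = 1 ∨ x (Fin.last k) = 2 * n (Fin.last k)) := by
    intro x hx h
    exact arith_extreme _ c _ h hc1 hc2 (hcS x (hAS x hx)) (hApar x hx)
  -- injectivity of the projection on A
  have hinj : Set.InjOn (fun x : Fin (k + 1) → ℕ => Fin.init x) A := by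
    intro x hx y hy hxy
    by_contra hne
    obtain ⟨j, hj⟩ := keynearA x hx y hy hne
    have heq : x j.castSucc = y j.castSucc := congrFun hxy j
    rw [heq] at hj
    exact arith_not_near_self _ hj
  refine ⟨A.image (fun x => Fin.init x), ?_, ?_, ?_⟩
  · -- boundary
    intro u hu
    obtain ⟨x, hxA, rfl⟩ := Finset.mem_image.1 hu
    obtain ⟨hin, i, hi⟩ := hbd x (hAS x hxA)
    constructor
    · intro j
      exact hin j.castSucc
    · by_cases hik : (i : ℕ) < k
      · refine ⟨⟨i, hik⟩, ?_⟩
        have hcast : (⟨(i : ℕ), hik⟩ : Fin k).castSucc = i := by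
          apply Fin.ext; rfl
        show x ((⟨(i : ℕ), hik⟩ : Fin k).castSucc) = 1 ∨
          x ((⟨(i : ℕ), hik⟩ : Fin k).castSucc) = 2 * n ((⟨(i : ℕ), hik⟩ : Fin k).castSucc)
        rw [hcast]
        exact hi
      · exfalso
        have hil : i = Fin.last k := by
          apply Fin.ext
          have := i.isLt
          simp only [Fin.val_last]
          omega
        rw [hil] at hi
        exact hAne x hxA hi
  · -- cardinality
    rw [Finset.card_image_of_injOn hinj, cardA']
  · -- pairwise sim
    intro u hu v hv
    obtain ⟨x, hxA, rfl⟩ := Finset.mem_image.1 hu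
    obtain ⟨y, hyA, rfl⟩ := Finset.mem_image.1 hv
    by_cases hne : x = y
    · left; rw [hne]
    · obtain ⟨j, hj⟩ := keynearA x hxA y hyA hne
      exact Or.inr ⟨j, hj⟩
end

section
/- If S is a skeleton of a k+1-dimensional box B(n_1,...,n_{k+1}) and c ∈ [2n_{k+1}] is a value not attained by the last coordinate of any element of S, then letting A be the set of even numbers in [2n_{k+1}] less than c together with the odd numbers in [2n_{k+1}] greater than c, the set S ∩ (B(n_1,...,n_k) × A) has cardinality exactly 2^k. -/
namespace Paper

/-- Any pairwise-`sim` finite set in `ℕ^k` has at most `2^k` elements,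
since the parity vector map is injective on it. -/
lemma clique_card_le {k : ℕ} (S : Finset (Fin k → ℕ))
    (h : ∀ x ∈ S, ∀ y ∈ S, sim x y) : S.card ≤ 2 ^ k := by
  have hle : S.card ≤ (Finset.univ : Finset (Fin k → Fin 2)).card := by
    apply Finset.card_le_card_of_injOn
      (fun x i => (⟨x i % 2, Nat.mod_lt _ (by norm_num)⟩ : Fin 2))
    · intro x _; exact Finset.mem_univ _
    · intro x hx y hy hxy
      rcases h x hx y hy with rfl | ⟨i, hi⟩
      · rfl
      · exfalso
        have h2 : x i % 2 = y i % 2 := by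
          have := congrFun hxy i
          simpa using congrArg Fin.val this
        rcases hi with h1 | h1 <;> omega
  simpa [Finset.card_univ] using hle

lemma filter_card_le {k : ℕ} (S : Finset (Fin (k + 1) → ℕ))
    (hsim : ∀ x ∈ S, ∀ y ∈ S, sim x y)
    (P : ℕ → Prop) [DecidablePred P]
    (hP : ∀ a b, P a → P b → near a b → False) :
    (S.filter (fun x => P (x (Fin.last k)))).card ≤ 2 ^ k := by
  classical
  set T := S.filter (fun x => P (x (Fin.last k))) with hT
  have hmem : ∀ x ∈ T, x ∈ S ∧ P (x (Fin.last k)) := by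
    intro x hx; exact Finset.mem_filter.mp hx
  set π : (Fin (k + 1) → ℕ) → (Fin k → ℕ) := fun x i => x i.castSucc with hπ
  have hinj : Set.InjOn π T := by
    intro x hx y hy hxy
    obtain ⟨hxS, hxP⟩ := hmem x hx
    obtain ⟨hyS, hyP⟩ := hmem y hy
    rcases hsim x hxS y hyS with rfl | ⟨i, hi⟩
    · rfl
    · exfalso
      rcases eq_or_ne i (Fin.last k) with rfl | hne
      · exact hP _ _ hxP hyP hi
      · obtain ⟨j, rfl⟩ := Fin.exists_castSucc_eq.mpr hne
        have hj : x j.castSucc = y j.castSucc := congrFun hxy j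
        rcases hi with h1 | h1 <;> omega
  have hcard : T.card = (T.image π).card := (Finset.card_image_of_injOn hinj).symm
  rw [hcard]
  apply clique_card_le
  intro u hu v hv
  obtain ⟨x, hx, rfl⟩ := Finset.mem_image.mp hu
  obtain ⟨y, hy, rfl⟩ := Finset.mem_image.mp hv
  obtain ⟨hxS, hxP⟩ := hmem x hx
  obtain ⟨hyS, hyP⟩ := hmem y hy
  rcases hsim x hxS y hyS with rfl | ⟨i, hi⟩
  · left; rfl
  · rcases eq_or_ne i (Fin.last k) with rfl | hne
    · exact (hP _ _ hxP hyP hi).elim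
    · obtain ⟨j, rfl⟩ := Fin.exists_castSucc_eq.mpr hne
      right; exact ⟨j, hi⟩

lemma hPA {c : ℕ} (a b : ℕ) (ha : (a % 2 = 0 ∧ a < c) ∨ (a % 2 = 1 ∧ c < a))
    (hb : (b % 2 = 0 ∧ b < c) ∨ (b % 2 = 1 ∧ c < b)) (hab : near a b) : False := by
  rcases hab with h | h <;> omega

lemma hPB {c : ℕ} (a b : ℕ) (ha : (a % 2 = 1 ∧ a < c) ∨ (a % 2 = 0 ∧ c < a))
    (hb : (b % 2 = 1 ∧ b < c) ∨ (b % 2 = 0 ∧ c < b)) (hab : near a b) : False := by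
  rcases hab with h | h <;> omega

end Paper
open Paper in
theorem stmt_9 {k : ℕ} (n : Fin (k + 1) → ℕ) (S : Finset (Fin (k + 1) → ℕ))
    (hS : IsSkeleton n S) (c : ℕ) (hc1 : 1 ≤ c) (hc2 : c ≤ 2 * n (Fin.last k))
    (hcS : ∀ x ∈ S, x (Fin.last k) ≠ c) :
    (S.filter (fun x => (x (Fin.last k) % 2 = 0 ∧ x (Fin.last k) < c) ∨
      (x (Fin.last k) % 2 = 1 ∧ c < x (Fin.last k)))).card = 2 ^ k := by
  classical
  obtain ⟨-, hcardS, hsim⟩ := hS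
  have h1 : (S.filter (fun x => (x (Fin.last k) % 2 = 0 ∧ x (Fin.last k) < c) ∨
      (x (Fin.last k) % 2 = 1 ∧ c < x (Fin.last k)))).card ≤ 2 ^ k :=
    filter_card_le S hsim
      (fun a => (a % 2 = 0 ∧ a < c) ∨ (a % 2 = 1 ∧ c < a)) (fun a b => hPA a b)
  have heq : S.filter (fun x => ¬ ((x (Fin.last k) % 2 = 0 ∧ x (Fin.last k) < c) ∨
        (x (Fin.last k) % 2 = 1 ∧ c < x (Fin.last k)))) =
      S.filter (fun x => (x (Fin.last k) % 2 = 1 ∧ x (Fin.last k) < c) ∨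
        (x (Fin.last k) % 2 = 0 ∧ c < x (Fin.last k))) := by
    apply Finset.filter_congr
    intro x hx
    have hne := hcS x hx
    clear * - hne
    omega
  have h2 : (S.filter (fun x => ¬ ((x (Fin.last k) % 2 = 0 ∧ x (Fin.last k) < c) ∨
      (x (Fin.last k) % 2 = 1 ∧ c < x (Fin.last k))))).card ≤ 2 ^ k := by
    rw [heq]
    exact filter_card_le S hsim
      (fun a => (a % 2 = 1 ∧ a < c) ∨ (a % 2 = 0 ∧ c < a)) (fun a b => hPB a b)
  have hsum := Finset.card_filter_add_card_filter_not
    (s := S) (p := fun x => (x (Fin.last k) % 2 = 0 ∧ x (Fin.last k) < c) ∨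
      (x (Fin.last k) % 2 = 1 ∧ c < x (Fin.last k)))
  rw [hcardS] at hsum
  have hpow : 2 ^ (k + 1) = 2 ^ k + 2 ^ k := by ring
  rw [hpow] at hsum
  linarith
end

section
/- For all n ≥ 2, the box B((2^0+1), (2^1+1), ..., (2^{n-2}+1), 2^{n-1}) (i.e., with dimensions 2^{i}+1 for 0 ≤ i ≤ n-2 together with a final dimension 2^{n-1}) is good. -/
namespace Skel
open Paper

def L (b : ℕ → ℕ) : ℕ → ℕ
  | 0 => 2 + 2 * b 1 - b 0
  | (i+1) => 2 * L b i - b (i+2)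

def caux (b : ℕ → ℕ) (j : ℕ) : ℕ :=
  if j = 0 then 1 + 2 * b 0 + b 1 else L b (j-1) + 2 * b (j+1)

variable {b b' : ℕ → ℕ}

lemma L_pos (hb : ∀ t, b t ≤ 1) : ∀ i, 1 ≤ L b i
  | 0 => by have := hb 0; have := hb 1; simp only [L]; omega
  | (i+1) => by have := L_pos hb i; have := hb (i+2); simp only [L]; omega

lemma L_le (hb : ∀ t, b t ≤ 1) : ∀ i, L b i ≤ 2 ^ (i+2)
  | 0 => by have := hb 0; have := hb 1; simp only [L]; norm_num; omega
  | (i+1) => by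
      have h1 := L_le hb i
      have h2 : (2:ℕ) ^ (i+1+2) = 2 * 2 ^ (i+2) := by ring
      simp only [L]; omega

lemma L_congr : ∀ i, (∀ t, t ≤ i + 1 → b t = b' t) → L b i = L b' i
  | 0, h => by simp only [L, h 0 (by omega), h 1 (by omega)]
  | (i+1), h => by
      have := L_congr i (fun t ht => h t (by omega))
      simp only [L, this, h (i+2) (by omega)]

lemma L_max (h0 : b 0 = 0) (h1 : b 1 = 1) :
    ∀ i, (∀ s, 2 ≤ s → s ≤ i + 1 → b s = 0) → L b i = 2 ^ (i+2)
  | 0, _ => by simp only [L, h0, h1]; norm_num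
  | (i+1), h => by
      have := L_max h0 h1 i (fun s hs hs' => h s hs (by omega))
      have h2 : (2:ℕ) ^ (i+1+2) = 2 * 2 ^ (i+2) := by ring
      simp only [L, this, h (i+2) (by omega) (by omega)]; omega

lemma L_min (h0 : b 0 = 1) (h1 : b 1 = 0) :
    ∀ i, (∀ s, 2 ≤ s → s ≤ i + 1 → b s = 1) → L b i = 1
  | 0, _ => by simp only [L, h0, h1]
  | (i+1), h => by
      have := L_min h0 h1 i (fun s hs hs' => h s hs (by omega))
      simp only [L, this, h (i+2) (by omega) (by omega)]

lemma simAux (hb : ∀ t, b t ≤ 1) (hb' : ∀ t, b' t ≤ 1) :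
    ∀ i, (∃ j, j ≤ i ∧ near (caux b j) (caux b' j)) ∨ near (L b i) (L b' i) ∨
      (∀ t, t ≤ i + 1 → b t = b' t)
  | 0 => by
      have h0 := hb 0; have h1 := hb 1; have h0' := hb' 0; have h1' := hb' 1
      by_cases he : b 0 = b' 0 ∧ b 1 = b' 1
      · exact Or.inr (Or.inr (fun t ht => by interval_cases t <;> tauto))
      · have : near (caux b 0) (caux b' 0) ∨ near (L b 0) (L b' 0) := by
          simp only [caux, L, near, if_pos]; omega
        rcases this with h | h
        · exact Or.inl ⟨0, le_refl _, h⟩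
        · exact Or.inr (Or.inl h)
  | (i+1) => by
      rcases simAux hb hb' i with ⟨j, hj, hnear⟩ | hnear | hall
      · exact Or.inl ⟨j, by omega, hnear⟩
      · -- near (L b i) (L b' i)
        have hp := L_pos hb i; have hp' := L_pos hb' i
        have h2 := hb (i+2); have h2' := hb' (i+2)
        have hnear' : L b i = L b' i + 1 ∨ L b' i = L b i + 1 := hnear
        have hkey : near (L b i + 2 * b (i+2)) (L b' i + 2 * b' (i+2)) ∨
            near (2 * L b i - b (i+2)) (2 * L b' i - b' (i+2)) := by
          unfold near; omega
        rcases hkey with h | h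
        · refine Or.inl ⟨i+1, le_refl _, ?_⟩
          simpa only [caux, if_neg (Nat.succ_ne_zero i), Nat.add_sub_cancel] using h
        · refine Or.inr (Or.inl ?_)
          simpa only [L] using h
      · by_cases he : b (i+2) = b' (i+2)
        · exact Or.inr (Or.inr (fun t ht => by
            rcases Nat.lt_or_ge t (i+2) with h | h
            · exact hall t (by omega)
            · have : t = i + 2 := by omega
              subst this; exact he))
        · have hL : L b i = L b' i := L_congr i hall
          have hp := L_pos hb i
          have h2 := hb (i+2); have h2' := hb' (i+2)
          refine Or.inr (Or.inl ?_)
          simp only [L, near]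
          omega

/-- the bit function attached to `ν`. -/
def bb (m : ℕ) (ν : Fin (m+2) → Bool) : ℕ → ℕ :=
  fun t => if h : t < m + 2 then (if ν ⟨t, h⟩ then 1 else 0) else 0

lemma bb_le (m : ℕ) (ν : Fin (m+2) → Bool) : ∀ t, bb m ν t ≤ 1 := by
  intro t; unfold bb; split_ifs <;> omega

/-- the skeleton point attached to a bit function `b`. -/
def P (m : ℕ) (b : ℕ → ℕ) : Fin (m+2) → ℕ :=
  fun j => if (j : ℕ) = m + 1 then L b m else caux b (j : ℕ)

end Skel
open Skel

open Paper in
/-- For `n = m + 2 ≥ 2`, the box `B(2^0+1, …, 2^{n-2}+1, 2^{n-1})` is good. -/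
theorem stmt_10 (m : ℕ) :
    Good (fun i : Fin (m + 2) =>
      if (i : ℕ) = m + 1 then 2 ^ (m + 1) else 2 ^ (i : ℕ) + 1) := by

  classical
  set n : Fin (m+2) → ℕ := fun i : Fin (m + 2) =>
      if (i : ℕ) = m + 1 then 2 ^ (m + 1) else 2 ^ (i : ℕ) + 1 with hn
  refine ⟨Finset.image (fun ν => P m (bb m ν)) Finset.univ, ?_, ?_, ?_⟩
  · -- boundary
    intro x hx
    rcases Finset.mem_image.1 hx with ⟨ν, -, rfl⟩
    set b := bb m ν with hbdef
    have hb : ∀ t, b t ≤ 1 := bb_le m ν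
    constructor
    · -- inBox
      intro j
      have hLp := L_pos hb
      have hLl := L_le hb
      by_cases hj : (j : ℕ) = m + 1
      · have : n j = 2 ^ (m+1) := by simp [hn, hj]
        simp only [P, hj, if_pos, this]
        have := hLl m
        have h2 : 2 * 2 ^ (m+1) = 2 ^ (m+2) := by ring
        exact ⟨hLp m, by omega⟩
      · have hnj : n j = 2 ^ (j : ℕ) + 1 := by simp [hn, hj]
        simp only [P, if_neg hj, hnj, caux]
        by_cases hj0 : (j : ℕ) = 0
        · simp only [hj0, if_pos]
          have := hb 0; have := hb 1
          norm_num; omega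
        · simp only [if_neg hj0]
          have hj1 : 1 ≤ (j : ℕ) := by omega
          have := hLp ((j : ℕ) - 1)
          have h2 : ((j:ℕ) - 1) + 2 = (j:ℕ) + 1 := by omega
          have := hLl ((j : ℕ) - 1)
          rw [h2] at this
          have h3 : 2 * (2 ^ (j:ℕ) + 1) = 2 ^ ((j:ℕ)+1) + 2 := by ring
          have := hb ((j:ℕ)+1)
          omega
    · -- exists boundary coordinate
      have h0 := hb 0; have h1 := hb 1
      have hm2 : 0 < m + 2 := by omega
      by_cases he01 : b 0 = b 1
      · refine ⟨⟨0, hm2⟩, ?_⟩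
        have hne : ¬ ((0:ℕ) = m + 1) := by omega
        have hn0 : n ⟨0, hm2⟩ = 2 := by simp [hn]
        simp only [P, hn0, Fin.val_mk, if_neg hne, caux, if_pos]
        omega
      · rcases Nat.lt_or_ge (b 0) (b 1) with hlt | hge
        · -- b 0 = 0, b 1 = 1
          have hb0 : b 0 = 0 := by omega
          have hb1 : b 1 = 1 := by omega
          by_cases hex : ∃ t, 2 ≤ t ∧ t ≤ m + 1 ∧ b t = 1
          · set t := Nat.find hex with ht
            obtain ⟨ht2, htm, htb⟩ := Nat.find_spec hex
            have hmin : ∀ s, 2 ≤ s → s ≤ t - 1 → b s = 0 := by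
              intro s hs2 hst
              have := Nat.find_min hex (m := s) (by omega)
              have := hb s; omega
            have hLv : L b (t - 2) = 2 ^ t := by
              have := L_max hb0 hb1 (t - 2) (fun s hs hs' => hmin s hs (by omega))
              have h2 : t - 2 + 2 = t := by omega
              rwa [h2] at this
            have hlt' : t - 1 < m + 2 := by omega
            refine ⟨⟨t - 1, hlt'⟩, Or.inr ?_⟩
            have hne : ¬ (t - 1 = m + 1) := by omega
            have hne0 : ¬ (t - 1 = 0) := by omega
            have hnv : n ⟨t-1, hlt'⟩ = 2 ^ (t-1) + 1 := by simp [hn, hne]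
            simp only [P, hnv, Fin.val_mk, if_neg hne, caux, if_neg hne0]
            have h3 : t - 1 - 1 = t - 2 := by omega
            have h4 : t - 1 + 1 = t := by omega
            rw [h3, h4, hLv, htb]
            have h5 : 2 * (2 ^ (t-1) + 1) = 2 ^ (t-1+1) + 2 := by ring
            have h6 : t - 1 + 1 = t := by omega
            rw [h5, h6]
          · push_neg at hex
            have hall : ∀ s, 2 ≤ s → s ≤ m + 1 → b s = 0 := by
              intro s hs2 hsm
              have := hex s hs2 hsm; have := hb s; omega
            have hLv : L b m = 2 ^ (m + 2) := L_max hb0 hb1 m (fun s hs hs' => hall s hs (by omega))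
            have hlt' : m + 1 < m + 2 := by omega
            refine ⟨⟨m+1, hlt'⟩, Or.inr ?_⟩
            have hnv : n ⟨m+1, hlt'⟩ = 2 ^ (m+1) := by simp [hn]
            simp only [P, hnv, Fin.val_mk, if_pos, hLv]
            ring
        · -- b 0 = 1, b 1 = 0
          have hb0 : b 0 = 1 := by omega
          have hb1 : b 1 = 0 := by omega
          by_cases hex : ∃ t, 2 ≤ t ∧ t ≤ m + 1 ∧ b t = 0
          · set t := Nat.find hex with ht
            obtain ⟨ht2, htm, htb⟩ := Nat.find_spec hex
            have hmin : ∀ s, 2 ≤ s → s ≤ t - 1 → b s = 1 := by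
              intro s hs2 hst
              have := Nat.find_min hex (m := s) (by omega)
              have := hb s; omega
            have hLv : L b (t - 2) = 1 := by
              have := L_min hb0 hb1 (t - 2) (fun s hs hs' => hmin s hs (by omega))
              exact this
            have hlt' : t - 1 < m + 2 := by omega
            refine ⟨⟨t - 1, hlt'⟩, Or.inl ?_⟩
            have hne : ¬ (t - 1 = m + 1) := by omega
            have hne0 : ¬ (t - 1 = 0) := by omega
            simp only [P, Fin.val_mk, if_neg hne, caux, if_neg hne0]
            have h3 : t - 1 - 1 = t - 2 := by omega
            have h4 : t - 1 + 1 = t := by omega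
            rw [h3, h4, hLv, htb]
          · push_neg at hex
            have hall : ∀ s, 2 ≤ s → s ≤ m + 1 → b s = 1 := by
              intro s hs2 hsm
              have := hex s hs2 hsm; have := hb s; omega
            have hLv : L b m = 1 := L_min hb0 hb1 m (fun s hs hs' => hall s hs (by omega))
            have hlt' : m + 1 < m + 2 := by omega
            refine ⟨⟨m+1, hlt'⟩, Or.inl ?_⟩
            simp only [P, Fin.val_mk, if_pos, hLv]
  · -- card
    have hinj : Function.Injective (fun ν : Fin (m+2) → Bool => P m (bb m ν)) := by
      intro ν ν' hPP
      simp only at hPP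
      have hb := bb_le m ν; have hb' := bb_le m ν'
      have key : ∀ t, t ≤ m + 1 → bb m ν t = bb m ν' t := by
        intro t
        induction t using Nat.strong_induction_on with
        | _ t ih =>
          intro htm
          have hcoord : ∀ j : ℕ, (hj : j < m + 2) →
              P m (bb m ν) ⟨j, hj⟩ = P m (bb m ν') ⟨j, hj⟩ := by
            intro j hj; rw [hPP]
          rcases Nat.lt_or_ge t 2 with ht2 | ht2
          · have h01 := hcoord 0 (by omega)
            have hne : ¬ ((0:ℕ) = m + 1) := by omega
            simp only [P, Fin.val_mk, if_neg hne, caux, if_pos] at h01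
            have := hb 0; have := hb 1; have := hb' 0; have := hb' 1
            interval_cases t <;> omega
          · obtain ⟨s, rfl⟩ : ∃ s, t = s + 2 := ⟨t - 2, by omega⟩
            have hLeq : L (bb m ν) s = L (bb m ν') s :=
              L_congr s (fun u hu => ih u (by omega) (by omega))
            have hj : s + 1 < m + 2 := by omega
            have h := hcoord (s+1) hj
            have hne : ¬ (s + 1 = m + 1) := by omega
            have hne0 : ¬ (s + 1 = 0) := by omega
            simp only [P, Fin.val_mk, if_neg hne, caux, if_neg hne0, Nat.add_sub_cancel,
              show s+1+1 = s+2 from rfl] at h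
            have := hb (s+2); have := hb' (s+2)
            omega
      funext i
      have := key i.val (by omega)
      simp only [bb, dif_pos i.isLt] at this
      cases hv : ν i <;> cases hv' : ν' i <;> simp_all [Fin.eta]
    rw [Finset.card_image_of_injective _ hinj, Finset.card_univ]
    simp [Fintype.card_fun]
  · -- sim
    intro x hx y hy
    rcases Finset.mem_image.1 hx with ⟨ν, -, rfl⟩
    rcases Finset.mem_image.1 hy with ⟨ν', -, rfl⟩
    set b := bb m ν with hbdef
    set b' := bb m ν' with hbdef'
    have hb : ∀ t, b t ≤ 1 := bb_le m ν
    have hb' : ∀ t, b' t ≤ 1 := bb_le m ν'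
    rcases simAux hb hb' m with ⟨j, hj, hnear⟩ | hnear | hall
    · refine Or.inr ⟨⟨j, by omega⟩, ?_⟩
      have hne : ¬ (j = m + 1) := by omega
      simpa only [P, Fin.val_mk, if_neg hne] using hnear
    · refine Or.inr ⟨⟨m+1, by omega⟩, ?_⟩
      simpa only [P, Fin.val_mk, if_pos] using hnear
    · left
      funext i
      by_cases hi : (i : ℕ) = m + 1
      · simp only [P, hi, if_pos, L_congr m hall]
      · simp only [P, if_neg hi, caux]
        split_ifs with h0
        · rw [hall 0 (by omega), hall 1 (by omega)]
        · rw [L_congr ((i:ℕ)-1) (fun u hu => hall u (by omega)), hall ((i:ℕ)+1) (by omega)]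
end

section
/- For all n ≥ 1, the box B(2^0+1, 2^1+1, ..., 2^{n-1}+1) is not good. -/
namespace Paper

private lemma near_mod_two {a b : ℕ} (h : near a b) : a % 2 ≠ b % 2 := by
  rcases h with h | h <;> omega

private def par {k : ℕ} (x : Fin k → ℕ) : Fin k → Bool := fun i => decide (x i % 2 = 1)

private lemma par_eq_iff {k : ℕ} {x y : Fin k → ℕ} {i : Fin k} (h : par x i = par y i) :
    x i % 2 = y i % 2 := by
  simp only [par, decide_eq_decide] at h; omega

private lemma step {k : ℕ} (n : Fin (k+1) → ℕ) (hb : 2 ^ (k+1) < 2 * n (Fin.last k))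
    (hg : Good n) : Good (fun j : Fin k => n j.castSucc) := by
  obtain ⟨S, hSb, hScard, hSsim⟩ := hg
  have hnear : ∀ x ∈ S, ∀ y ∈ S, x ≠ y → ∃ i, near (x i) (y i) := by
    intro x hx y hy hxy
    rcases hSsim x hx y hy with h | h
    · exact absurd h hxy
    · exact h
  -- parity map is injective on S
  have hφinj : Set.InjOn par (S : Set (Fin (k+1) → ℕ)) := by
    intro x hx y hy hxy
    by_contra hne
    obtain ⟨i, hi⟩ := hnear x (Finset.mem_coe.mp hx) y (Finset.mem_coe.mp hy) hne
    exact near_mod_two hi (par_eq_iff (congrFun hxy i))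
  have himg : S.image par = Finset.univ := by
    apply Finset.eq_univ_of_card
    rw [Finset.card_image_of_injOn hφinj, hScard]
    simp
  -- unattained value t of the last coordinate
  obtain ⟨t, htmem, htA⟩ :
      ∃ t ∈ Finset.Icc 1 (2 * n (Fin.last k)), t ∉ S.image (fun z => z (Fin.last k)) := by
    by_contra hcon
    push_neg at hcon
    have hsub : Finset.Icc 1 (2 * n (Fin.last k)) ⊆ S.image (fun z => z (Fin.last k)) := hcon
    have h1 := Finset.card_le_card hsub
    have h2 : (S.image (fun z => z (Fin.last k))).card ≤ S.card := Finset.card_image_le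
    have h3 : (Finset.Icc 1 (2 * n (Fin.last k))).card = 2 * n (Fin.last k) := by
      rw [Nat.card_Icc, Nat.add_sub_cancel]
    rw [h3] at h1
    rw [hScard] at h2
    exact lt_irrefl _ ((h1.trans h2).trans_lt hb)
  rw [Finset.mem_Icc] at htmem
  have htS : ∀ z ∈ S, z (Fin.last k) ≠ t := by
    intro z hz h
    exact htA (Finset.mem_image.mpr ⟨z, hz, h⟩)
  -- the selected half
  set P := S.filter (fun z => (z (Fin.last k) < t ∧ z (Fin.last k) % 2 = 0) ∨ (t < z (Fin.last k) ∧ z (Fin.last k) % 2 = 1)) with hPdef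
  have hPS : ∀ z ∈ P, z ∈ S := fun z hz => (Finset.mem_filter.mp hz).1
  have hPcond : ∀ z ∈ P, (z (Fin.last k) < t ∧ z (Fin.last k) % 2 = 0) ∨ (t < z (Fin.last k) ∧ z (Fin.last k) % 2 = 1) :=
    fun z hz => (Finset.mem_filter.mp hz).2
  have hPlast : ∀ z ∈ P, ∀ w ∈ P, ¬ near (z (Fin.last k)) (w (Fin.last k)) := by
    intro z hz w hw h
    have h1 := hPcond z hz
    have h2 := hPcond w hw
    rcases h with h | h <;> omega
  set proj := fun (z : Fin (k+1) → ℕ) (j : Fin k) => z j.castSucc with hproj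
  -- surjectivity of parity on the projection
  have hsurj : ∀ u : Fin k → Bool, ∃ z ∈ P, par (proj z) = u := by
    intro u
    have h0 : Fin.snoc u false ∈ S.image par := by rw [himg]; exact Finset.mem_univ _
    have h1 : Fin.snoc u true ∈ S.image par := by rw [himg]; exact Finset.mem_univ _
    obtain ⟨z0, hz0S, hz0⟩ := Finset.mem_image.mp h0
    obtain ⟨z1, hz1S, hz1⟩ := Finset.mem_image.mp h1
    have hpar0 : z0 (Fin.last k) % 2 = 0 := by
      have h := congrFun hz0 (Fin.last k)
      simp only [par, Fin.snoc_last, decide_eq_false_iff_not] at h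
      omega
    have hpar1 : z1 (Fin.last k) % 2 = 1 := by
      have h := congrFun hz1 (Fin.last k)
      simp only [par, Fin.snoc_last, decide_eq_true_eq] at h
      exact h
    have hne01 : z0 ≠ z1 := by
      intro h; rw [h] at hpar0; omega
    obtain ⟨i, hi⟩ := hnear z0 hz0S z1 hz1S hne01
    have hiL : near (z0 (Fin.last k)) (z1 (Fin.last k)) := by
      rcases Fin.eq_castSucc_or_eq_last i with ⟨j, rfl⟩ | rfl
      · exfalso
        have e0 := congrFun hz0 j.castSucc
        have e1 := congrFun hz1 j.castSucc
        rw [Fin.snoc_castSucc] at e0 e1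
        exact near_mod_two hi (par_eq_iff (e0.trans e1.symm))
      · exact hi
    have ht0 := htS z0 hz0S
    have ht1 := htS z1 hz1S
    have hpp0 : par (proj z0) = u := by
      funext j
      have := congrFun hz0 j.castSucc
      rw [Fin.snoc_castSucc] at this
      exact this
    have hpp1 : par (proj z1) = u := by
      funext j
      have := congrFun hz1 j.castSucc
      rw [Fin.snoc_castSucc] at this
      exact this
    by_cases hc : z0 (Fin.last k) < t
    · exact ⟨z0, Finset.mem_filter.mpr ⟨hz0S, Or.inl ⟨hc, hpar0⟩⟩, hpp0⟩
    · have hz1t : t < z1 (Fin.last k) := by rcases hiL with h | h <;> omega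
      exact ⟨z1, Finset.mem_filter.mpr ⟨hz1S, Or.inr ⟨hz1t, hpar1⟩⟩, hpp1⟩
  set Q := P.image proj with hQ
  -- parity is injective on Q
  have hQinj : Set.InjOn par (Q : Set (Fin k → ℕ)) := by
    intro x hx y hy hxy
    obtain ⟨z, hz, rfl⟩ := Finset.mem_image.mp (Finset.mem_coe.mp hx)
    obtain ⟨w, hw, rfl⟩ := Finset.mem_image.mp (Finset.mem_coe.mp hy)
    by_contra hne
    have hzw : z ≠ w := by rintro rfl; exact hne rfl
    obtain ⟨i, hi⟩ := hnear z (hPS z hz) w (hPS w hw) hzw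
    rcases Fin.eq_castSucc_or_eq_last i with ⟨j, rfl⟩ | rfl
    · exact near_mod_two hi (par_eq_iff (congrFun hxy j))
    · exact hPlast z hz w hw hi
  have hQpar : Q.image par = Finset.univ := by
    apply Finset.eq_univ_iff_forall.mpr
    intro u
    obtain ⟨z, hz, hu⟩ := hsurj u
    exact Finset.mem_image.mpr ⟨proj z, Finset.mem_image.mpr ⟨z, hz, rfl⟩, hu⟩
  have hQcard : Q.card = 2 ^ k := by
    have h := Finset.card_image_of_injOn hQinj
    rw [hQpar] at h
    rw [← h]
    simp
  refine ⟨Q, ?_, hQcard, ?_⟩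
  · intro x hx
    obtain ⟨z, hzP, rfl⟩ := Finset.mem_image.mp hx
    obtain ⟨hin, i, hi⟩ := hSb z (hPS z hzP)
    refine ⟨fun j => hin j.castSucc, ?_⟩
    rcases Fin.eq_castSucc_or_eq_last i with ⟨j, rfl⟩ | rfl
    · exact ⟨j, hi⟩
    · exfalso
      have hc := hPcond z hzP
      rcases hi with hi | hi <;> omega
  · intro x hx y hy
    by_cases hxy : x = y
    · exact Or.inl hxy
    obtain ⟨z, hzP, rfl⟩ := Finset.mem_image.mp hx
    obtain ⟨w, hwP, rfl⟩ := Finset.mem_image.mp hy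
    have hzw : z ≠ w := by rintro rfl; exact hxy rfl
    obtain ⟨i, hi⟩ := hnear z (hPS z hzP) w (hPS w hwP) hzw
    rcases Fin.eq_castSucc_or_eq_last i with ⟨j, rfl⟩ | rfl
    · exact Or.inr ⟨j, hi⟩
    · exact absurd hi (hPlast z hzP w hwP)

private lemma notGood : ∀ k : ℕ, ¬ Good (fun i : Fin k => 2 ^ (i : ℕ) + 1)
  | 0 => by
    rintro ⟨S, hSb, hScard, -⟩
    have hne : S.Nonempty := Finset.card_pos.mp (by rw [hScard]; norm_num)
    obtain ⟨x, hx⟩ := hne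
    obtain ⟨-, i, -⟩ := hSb x hx
    exact i.elim0
  | (k+1) => fun hg => by
    apply notGood k
    have hb : 2 ^ (k+1) < 2 * ((fun i : Fin (k+1) => 2 ^ (i : ℕ) + 1) (Fin.last k)) := by
      show 2 ^ (k+1) < 2 * (2 ^ ((Fin.last k : ℕ)) + 1)
      have hlk : ((Fin.last k : Fin (k+1)) : ℕ) = k := rfl
      rw [hlk, pow_succ]
      omega
    have h := step (fun i : Fin (k+1) => 2 ^ (i : ℕ) + 1) hb hg
    convert h using 2 with j
    rfl


end Paper

open Paper in
theorem stmt_11 (n : ℕ) (hn : 1 ≤ n) :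
    ¬ Good (fun i : Fin n => 2 ^ (i : ℕ) + 1) := by
  exact notGood n
end

section
/- For all n ≥ 1, the box B(n^{2^{n-1}}) (the 2^{n-1}-dimensional box with all dimensions equal to n) is good. Consequently, α(complement(C_{2n+1})^{⊠ 2^{n-1}}) ≥ 2^{2^{n-1}} + 1 and Θ(complement(C_{2n+1})) ≥ (2^{2^{n-1}}+1)^{1/2^{n-1}}. -/
namespace BH
open Paper

def prA (n a : ℕ) : Bool → ℕ
  | false => if a ≤ n then a else if a = n+1 then n+1 else n
  | true  => if a ≤ n then 2*n+3-a else if a = n+1 then n+2 else n+1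

def prB (n a : ℕ) : Bool → ℕ
  | false => if a ≤ n then (if (a+n) % 2 = 0 then a+1 else a+2)
             else if a = n+1 then n+3 else 2*n+1-a
  | true  => if a ≤ n then (if (a+n) % 2 = 0 then a+2 else a+1)
             else if a = n+1 then n else a+2

lemma near_ne {a b : ℕ} (h : near a b) : a ≠ b := by rcases h with h|h <;> omega

lemma prA_range (n a : ℕ) (b : Bool) (hn : 1 ≤ n) (h1 : 1 ≤ a) (h2 : a ≤ 2*n) :
    1 ≤ prA n a b ∧ prA n a b ≤ 2*(n+1) := by
  cases b <;> simp only [prA] <;> split_ifs <;> omega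

lemma prB_range (n a : ℕ) (b : Bool) (hn : 1 ≤ n) (h1 : 1 ≤ a) (h2 : a ≤ 2*n) :
    1 ≤ prB n a b ∧ prB n a b ≤ 2*(n+1) := by
  cases b <;> simp only [prB] <;> split_ifs <;> omega

lemma pr_cross (n a a' : ℕ) (b b' : Bool) (hn : 1 ≤ n) (ha1 : 1 ≤ a) (ha2 : a ≤ 2*n)
    (hb1 : 1 ≤ a') (hb2 : a' ≤ 2*n) (h : near a a') :
    near (prA n a b) (prA n a' b') ∨ near (prB n a b) (prB n a' b') := by
  rcases h with h | h <;> cases b <;> cases b' <;>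
    simp only [prA, prB, near] <;> split_ifs <;> omega

lemma pr_same (n a : ℕ) (b b' : Bool) (hn : 1 ≤ n) (h1 : 1 ≤ a) (h2 : a ≤ 2*n)
    (hbb : b ≠ b') :
    near (prA n a b) (prA n a b') ∨ near (prB n a b) (prB n a b') := by
  cases b <;> cases b' <;> first
    | exact absurd rfl hbb
    | (simp only [prA, prB, near]; split_ifs <;> omega)

lemma pr_bdry (n a : ℕ) (b : Bool) (hn : 1 ≤ n) (h1 : 1 ≤ a) (h2 : a ≤ 2*n)
    (h : a = 1 ∨ a = 2*n) :
    prA n a b = 1 ∨ prA n a b = 2*(n+1) ∨ prB n a b = 1 ∨ prB n a b = 2*(n+1) := by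
  cases b <;> simp only [prA, prB] <;> split_ifs <;> omega

def fidx {k : ℕ} (j : Fin (k*2)) : Fin k :=
  ⟨(j : ℕ) % k, Nat.mod_lt _ (by have := j.isLt; omega)⟩

def expand {k : ℕ} (n : ℕ) (x : Fin k → ℕ) (δ : Fin k → Bool) (j : Fin (k*2)) : ℕ :=
  if (j : ℕ) < k then prA n (x (fidx j)) (δ (fidx j)) else prB n (x (fidx j)) (δ (fidx j))

lemma fidx_lo {k : ℕ} (i : Fin k) (h : (i:ℕ) < k*2) : fidx (⟨(i:ℕ), h⟩ : Fin (k*2)) = i := by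
  apply Fin.ext
  simp only [fidx]
  exact Nat.mod_eq_of_lt i.isLt

lemma fidx_hi {k : ℕ} (i : Fin k) (h : (i:ℕ)+k < k*2) :
    fidx (⟨(i:ℕ)+k, h⟩ : Fin (k*2)) = i := by
  apply Fin.ext
  simp only [fidx]
  rw [Nat.add_mod_right]
  exact Nat.mod_eq_of_lt i.isLt

lemma expand_lo {k n : ℕ} (x : Fin k → ℕ) (δ : Fin k → Bool) (i : Fin k) (h : (i:ℕ) < k*2) :
    expand n x δ ⟨(i:ℕ), h⟩ = prA n (x i) (δ i) := by
  have hc : ((⟨(i:ℕ), h⟩ : Fin (k*2)) : ℕ) < k := i.isLt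
  simp only [expand, fidx_lo, if_pos hc]

lemma expand_hi {k n : ℕ} (x : Fin k → ℕ) (δ : Fin k → Bool) (i : Fin k) (h : (i:ℕ)+k < k*2) :
    expand n x δ ⟨(i:ℕ)+k, h⟩ = prB n (x i) (δ i) := by
  have hc : ¬ ((⟨(i:ℕ)+k, h⟩ : Fin (k*2)) : ℕ) < k := by simp
  simp only [expand, fidx_hi, if_neg hc]

lemma step {k n : ℕ} (hn : 1 ≤ n) (S : Finset (Fin k → ℕ))
    (hS : IsSkeleton (fun _ : Fin k => n) S) :
    ∃ S' : Finset (Fin (k*2) → ℕ), IsSkeleton (fun _ : Fin (k*2) => n+1) S' := by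
  classical
  obtain ⟨hbd, hcard, hsim⟩ := hS
  have hbox : ∀ x ∈ S, ∀ i, 1 ≤ x i ∧ x i ≤ 2*n := by
    intro x hx i
    have := (hbd x hx).1 i
    simpa using this
  set F : (Fin k → ℕ) × (Fin k → Bool) → (Fin (k*2) → ℕ) :=
    fun p => expand n p.1 p.2 with hF
  have mk : ∀ (x y : Fin k → ℕ) (δ ε : Fin k → Bool) (i : Fin k),
      (near (prA n (x i) (δ i)) (prA n (y i) (ε i)) ∨
       near (prB n (x i) (δ i)) (prB n (y i) (ε i))) →
      ∃ j, near (expand n x δ j) (expand n y ε j) := by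
    intro x y δ ε i h
    have h1 : (i : ℕ) < k*2 := by have := i.isLt; omega
    have h2 : (i : ℕ) + k < k*2 := by have := i.isLt; omega
    rcases h with h | h
    · exact ⟨⟨(i:ℕ), h1⟩, by rw [expand_lo, expand_lo]; exact h⟩
    · exact ⟨⟨(i:ℕ)+k, h2⟩, by rw [expand_hi, expand_hi]; exact h⟩
  have key : ∀ x ∈ S, ∀ y ∈ S, ∀ δ ε : Fin k → Bool, (x ≠ y ∨ δ ≠ ε) →
      ∃ j, near (expand n x δ j) (expand n y ε j) := by
    intro x hx y hy δ ε hne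
    rcases eq_or_ne x y with rfl | hxy
    · have hδ : δ ≠ ε := hne.resolve_left (fun h => h rfl)
      obtain ⟨i, hi⟩ := Function.ne_iff.mp hδ
      have hb := hbox x hx i
      exact mk x x δ ε i (pr_same n (x i) (δ i) (ε i) hn hb.1 hb.2 hi)
    · rcases hsim x hx y hy with h | ⟨i, hi⟩
      · exact absurd h hxy
      · have hb1 := hbox x hx i
        have hb2 := hbox y hy i
        exact mk x y δ ε i (pr_cross n (x i) (y i) (δ i) (ε i) hn hb1.1 hb1.2 hb2.1 hb2.2 hi)
  refine ⟨(S ×ˢ (Finset.univ : Finset (Fin k → Bool))).image F, ?_, ?_, ?_⟩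
  · intro z hz
    obtain ⟨⟨x, δ⟩, hmem, rfl⟩ := Finset.mem_image.mp hz
    have hxS : x ∈ S := (Finset.mem_product.mp hmem).1
    constructor
    · intro j
      have hb := hbox x hxS (fidx j)
      by_cases hj : (j:ℕ) < k
      · have hA := prA_range n (x (fidx j)) (δ (fidx j)) hn hb.1 hb.2
        simp only [hF, expand, if_pos hj]
        simpa using hA
      · have hB := prB_range n (x (fidx j)) (δ (fidx j)) hn hb.1 hb.2
        simp only [hF, expand, if_neg hj]
        simpa using hB
    · obtain ⟨i, hi⟩ := (hbd x hxS).2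
      have hi' : x i = 1 ∨ x i = 2*n := by simpa using hi
      have hb := hbox x hxS i
      have h1 : (i : ℕ) < k*2 := by have := i.isLt; omega
      have h2 : (i : ℕ) + k < k*2 := by have := i.isLt; omega
      rcases pr_bdry n (x i) (δ i) hn hb.1 hb.2 hi' with h | h | h | h
      · exact ⟨⟨(i:ℕ), h1⟩, Or.inl (by simp only [hF]; rw [expand_lo]; exact h)⟩
      · exact ⟨⟨(i:ℕ), h1⟩, Or.inr (by simp only [hF]; rw [expand_lo]; simpa using h)⟩
      · exact ⟨⟨(i:ℕ)+k, h2⟩, Or.inl (by simp only [hF]; rw [expand_hi]; exact h)⟩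
      · exact ⟨⟨(i:ℕ)+k, h2⟩, Or.inr (by simp only [hF]; rw [expand_hi]; simpa using h)⟩
  · have hinj : Set.InjOn F ↑(S ×ˢ (Finset.univ : Finset (Fin k → Bool))) := by
      intro p hp q hq hFeq
      by_contra hne
      have hp' : p.1 ∈ S := (Finset.mem_product.mp (Finset.mem_coe.mp hp)).1
      have hq' : q.1 ∈ S := (Finset.mem_product.mp (Finset.mem_coe.mp hq)).1
      have hdiff : p.1 ≠ q.1 ∨ p.2 ≠ q.2 := by
        by_contra hc
        push_neg at hc
        exact hne (Prod.ext hc.1 hc.2)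
      obtain ⟨j, hj⟩ := key p.1 hp' q.1 hq' p.2 q.2 hdiff
      have : expand n p.1 p.2 j = expand n q.1 q.2 j := congrFun hFeq j
      exact near_ne hj this
    rw [Finset.card_image_of_injOn hinj, Finset.card_product, hcard, Finset.card_univ]
    have hcf : Fintype.card (Fin k → Bool) = 2^k := by
      simp [Fintype.card_fun]
    rw [hcf, pow_mul, sq]
  · intro z hz w hw
    obtain ⟨⟨x, δ⟩, hmem, rfl⟩ := Finset.mem_image.mp hz
    obtain ⟨⟨y, ε⟩, hmem', rfl⟩ := Finset.mem_image.mp hw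
    have hxS : x ∈ S := (Finset.mem_product.mp hmem).1
    have hyS : y ∈ S := (Finset.mem_product.mp hmem').1
    rcases eq_or_ne x y with rfl | hxy
    · rcases eq_or_ne δ ε with rfl | hδε
      · exact Or.inl rfl
      · exact Or.inr (key x hxS x hxS δ ε (Or.inr hδε))
    · exact Or.inr (key x hxS y hyS δ ε (Or.inl hxy))

lemma base : ∃ S : Finset (Fin 1 → ℕ), IsSkeleton (fun _ : Fin 1 => 1) S := by
  classical
  have hne : (fun _ : Fin 1 => (1:ℕ)) ≠ (fun _ => 2) := by
    intro h
    have := congrFun h 0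
    omega
  refine ⟨{fun _ => 1, fun _ => 2}, ?_, ?_, ?_⟩
  · intro x hx
    rcases Finset.mem_insert.mp hx with rfl | hx
    · exact ⟨fun i => by norm_num, ⟨0, Or.inl rfl⟩⟩
    · rw [Finset.mem_singleton.mp hx]
      exact ⟨fun i => by norm_num, ⟨0, Or.inr (by norm_num)⟩⟩
  · rw [Finset.card_insert_of_notMem (by simpa using hne), Finset.card_singleton]
    norm_num
  · intro x hx y hy
    rcases Finset.mem_insert.mp hx with rfl | hx <;>
      rcases Finset.mem_insert.mp hy with rfl | hy
    · exact Or.inl rfl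
    · rw [Finset.mem_singleton.mp hy]
      exact Or.inr ⟨0, Or.inr rfl⟩
    · rw [Finset.mem_singleton.mp hx]
      exact Or.inr ⟨0, Or.inl rfl⟩
    · rw [Finset.mem_singleton.mp hx, Finset.mem_singleton.mp hy]
      exact Or.inl rfl

lemma good_aux (m : ℕ) : ∃ S : Finset (Fin (2^m) → ℕ), IsSkeleton (fun _ => m+1) S := by
  induction m with
  | zero => exact base
  | succ m ih =>
      obtain ⟨S, hS⟩ := ih
      rw [pow_succ]
      exact step (by omega) S hS

lemma le_indepNum {V : Type*} [Fintype V] (G : SimpleGraph V) (s : Finset V)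
    (h : IsIndep G ↑s) : s.card ≤ indepNum G := by
  apply le_csSup
  · refine ⟨Fintype.card V, ?_⟩
    rintro m ⟨t, -, rfl⟩
    exact (Finset.card_le_univ t).trans_eq Finset.card_univ
  · exact ⟨s, h, rfl⟩

lemma indepNum_le_card {V : Type*} [Fintype V] (G : SimpleGraph V) :
    indepNum G ≤ Fintype.card V := by
  apply csSup_le
  · exact ⟨0, ∅, by simp [IsIndep], by simp⟩
  · rintro m ⟨t, -, rfl⟩
    exact (Finset.card_le_univ t).trans_eq Finset.card_univ

lemma capacity_ge {V : Type*} [Fintype V] (G : SimpleGraph V) (k : ℕ+) :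
    (indepNum (strongPow G k) : ℝ) ^ ((k : ℝ)⁻¹) ≤ shannonCapacity G := by
  classical
  set C : ℝ := (Fintype.card V : ℝ) + 1 with hC
  have hC0 : (0:ℝ) ≤ C := by positivity
  have hb : ∀ j : ℕ+, (indepNum (strongPow G j) : ℝ) ^ ((j : ℝ)⁻¹) ≤ C := by
    intro j
    have h1 : (indepNum (strongPow G j) : ℝ) ≤ C ^ (j : ℕ) := by
      have h2 : indepNum (strongPow G j) ≤ Fintype.card (Fin (j:ℕ) → V) :=
        indepNum_le_card _
      have h3 : Fintype.card (Fin (j:ℕ) → V) = Fintype.card V ^ (j:ℕ) := by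
        simp [Fintype.card_fun]
      calc (indepNum (strongPow G j) : ℝ)
          ≤ ((Fintype.card V ^ (j:ℕ) : ℕ) : ℝ) := by exact_mod_cast h3 ▸ h2
        _ = ((Fintype.card V : ℝ)) ^ (j:ℕ) := by push_cast; ring
        _ ≤ C ^ (j:ℕ) := by
            apply pow_le_pow_left₀ (by positivity)
            simp [hC]
    have h4 : (indepNum (strongPow G j) : ℝ) ^ ((j : ℝ)⁻¹) ≤ (C ^ (j:ℕ)) ^ ((j : ℝ)⁻¹) :=
      Real.rpow_le_rpow (by positivity) h1 (by positivity)
    refine h4.trans_eq ?_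
    have hj : ((j : ℕ) : ℝ) = (j : ℝ) := by norm_cast
    rw [← Real.rpow_natCast C (j:ℕ), ← Real.rpow_mul hC0, hj,
      mul_inv_cancel₀ (by exact_mod_cast j.pos.ne'), Real.rpow_one]
  exact le_ciSup_of_le ⟨C, by rintro _ ⟨j, rfl⟩; exact hb j⟩ k le_rfl

end BH

open Paper in
theorem stmt_12 (n : ℕ) (hn : 1 ≤ n) :
    Good (fun _ : Fin (2 ^ (n - 1)) => n) ∧
    2 ^ (2 ^ (n - 1)) + 1 ≤ indepNum (strongPow (cycleCompl n) (2 ^ (n - 1))) ∧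
    ((2 : ℝ) ^ (2 ^ (n - 1) : ℕ) + 1) ^ ((2 ^ (n - 1) : ℕ) : ℝ)⁻¹ ≤
      shannonCapacity (cycleCompl n) := by
  classical
  haveI : NeZero (2*n+1) := ⟨by omega⟩
  haveI : Fact (1 < 2*n+1) := ⟨by omega⟩
  have hGood : Good (fun _ : Fin (2^(n-1)) => n) := by
    obtain ⟨S, hS⟩ := BH.good_aux (n-1)
    have h : n - 1 + 1 = n := by omega
    rw [h] at hS
    exact ⟨S, hS⟩
  have hIndep : 2^(2^(n-1)) + 1 ≤ indepNum (strongPow (cycleCompl n) (2^(n-1))) := by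
    obtain ⟨S, hbd, hcard, hsim⟩ := hGood
    set f : (Fin (2^(n-1)) → ℕ) → (Fin (2^(n-1)) → ZMod (2*n+1)) :=
      fun x i => ((x i : ℕ) : ZMod (2*n+1)) with hf
    have hbox : ∀ x ∈ S, ∀ i, 1 ≤ x i ∧ x i ≤ 2*n := by
      intro x hx i
      simpa using (hbd x hx).1 i
    have hcastinj : ∀ a b : ℕ, a ≤ 2*n → b ≤ 2*n →
        ((a : ZMod (2*n+1)) = (b : ZMod (2*n+1))) → a = b := by
      intro a b ha hb h
      have h1 : ((a : ℕ) : ZMod (2*n+1)).val = a := ZMod.val_cast_of_lt (by omega)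
      have h2 : ((b : ℕ) : ZMod (2*n+1)).val = b := ZMod.val_cast_of_lt (by omega)
      rw [h, h2] at h1
      omega
    have hfinj : Set.InjOn f ↑S := by
      intro x hx y hy h
      funext i
      exact hcastinj _ _ (hbox x (Finset.mem_coe.mp hx) i).2
        (hbox y (Finset.mem_coe.mp hy) i).2 (congrFun h i)
    have h0 : (0 : Fin (2^(n-1)) → ZMod (2*n+1)) ∉ S.image f := by
      intro hmem
      obtain ⟨x, hx, hfx⟩ := Finset.mem_image.mp hmem
      obtain ⟨i, hi⟩ := (hbd x hx).2
      have hxi : ((x i : ℕ) : ZMod (2*n+1)) = ((0:ℕ) : ZMod (2*n+1)) := by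
        have := congrFun hfx i
        simpa [hf] using this
      have := hcastinj (x i) 0 (hbox x hx i).2 (by omega) hxi
      have h1 := (hbox x hx i).1
      omega
    have hsub : ∀ (a b : ℕ), a = b + 1 →
        ((a : ZMod (2*n+1)) - (b : ZMod (2*n+1)) = 1) := by
      intro a b h
      subst h
      push_cast
      ring
    have h2n : (0:ZMod (2*n+1)) - ((2*n : ℕ) : ZMod (2*n+1)) = 1 := by
      have hz : ((2*n+1 : ℕ) : ZMod (2*n+1)) = 0 := ZMod.natCast_self _
      push_cast at hz ⊢
      linear_combination -hz
    have hindep : IsIndep (strongPow (cycleCompl n) (2^(n-1)))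
        ↑(insert 0 (S.image f)) := by
      intro u hu v hv hadj
      have hadj' : u ≠ v ∧ ∀ i, u i = v i ∨
          (u i ≠ v i ∧ u i - v i ≠ 1 ∧ v i - u i ≠ 1) := hadj
      obtain ⟨hne, hall⟩ := hadj'
      have final : ∀ i, (v i - u i = 1 ∨ u i - v i = 1) → False := by
        intro i hi
        rcases hall i with h | h
        · rw [h] at hi
          rcases hi with h1 | h1 <;> rw [sub_self] at h1 <;> exact one_ne_zero h1.symm
        · obtain ⟨hne', hA, hB⟩ := h
          rcases hi with h1 | h1
          · exact hB h1
          · exact hA h1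
      have hcases : ∀ w, w ∈ insert (0 : Fin (2^(n-1)) → ZMod (2*n+1)) (S.image f) →
          w = 0 ∨ ∃ x, x ∈ S ∧ f x = w := by
        intro w hw
        rcases Finset.mem_insert.mp hw with h | h
        · exact Or.inl h
        · obtain ⟨x, hx, hfx⟩ := Finset.mem_image.mp h
          exact Or.inr ⟨x, hx, hfx⟩
      have hu' := hcases u (Finset.mem_coe.mp hu)
      have hv' := hcases v (Finset.mem_coe.mp hv)
      rcases hu' with rfl | ⟨x, hx, rfl⟩ <;> rcases hv' with rfl | ⟨y, hy, rfl⟩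
      · exact hne rfl
      · obtain ⟨i, hi⟩ := (hbd y hy).2
        have hi' : y i = 1 ∨ y i = 2*n := by simpa using hi
        apply final i
        rcases hi' with h | h
        · left
          simp [hf, h]
        · right
          simpa [hf, h] using h2n
      · obtain ⟨i, hi⟩ := (hbd x hx).2
        have hi' : x i = 1 ∨ x i = 2*n := by simpa using hi
        apply final i
        rcases hi' with h | h
        · right
          simp [hf, h]
        · left
          simpa [hf, h] using h2n
      · rcases eq_or_ne x y with rfl | hxy
        · exact hne rfl
        · rcases hsim x hx y hy with h | ⟨i, hi⟩
          · exact hxy h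
          · apply final i
            rcases hi with h | h
            · right
              simp only [hf]
              exact hsub _ _ h
            · left
              simp only [hf]
              exact hsub _ _ h
    have hcard2 : (insert (0:Fin (2^(n-1)) → ZMod (2*n+1)) (S.image f)).card
        = 2^(2^(n-1)) + 1 := by
      rw [Finset.card_insert_of_notMem h0, Finset.card_image_of_injOn hfinj, hcard]
    calc 2^(2^(n-1)) + 1 = _ := hcard2.symm
      _ ≤ _ := BH.le_indepNum _ _ hindep
  refine ⟨hGood, hIndep, ?_⟩
  set k₀ : ℕ+ := ⟨2^(n-1), by positivity⟩ with hk₀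
  have hcap := BH.capacity_ge (cycleCompl n) k₀
  have hmono : ((2 : ℝ) ^ (2 ^ (n - 1) : ℕ) + 1) ^ ((2 ^ (n - 1) : ℕ) : ℝ)⁻¹ ≤
      (indepNum (strongPow (cycleCompl n) k₀) : ℝ) ^ ((k₀ : ℝ)⁻¹) := by
    have hk : ((k₀ : ℕ) : ℝ) = ((2 ^ (n - 1) : ℕ) : ℝ) := by norm_cast
    have hkr : (k₀ : ℝ) = ((2 ^ (n - 1) : ℕ) : ℝ) := by
      rw [← hk]
    rw [hkr]
    apply Real.rpow_le_rpow (by positivity) ?_ (by positivity)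
    have : ((2^(2^(n-1)) + 1 : ℕ) : ℝ) ≤ (indepNum (strongPow (cycleCompl n) (2^(n-1))) : ℝ) := by
      exact_mod_cast hIndep
    calc ((2 : ℝ) ^ (2 ^ (n - 1) : ℕ) + 1) = ((2^(2^(n-1)) + 1 : ℕ) : ℝ) := by push_cast; ring
      _ ≤ _ := this
  exact hmono.trans hcap
end

section
/- Let a_m denote the number of partitions of m into powers of 2, and let r_n = a_{2(n-1)}. Then for every n ≥ 1, a_n + Σ_{i=⌊n/2⌋+1}^{n-1} a_i = r_n. -/
namespace Paper

/-- the number of partitions of `m` into powers of `2`. -/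
noncomputable def binPartCard (m : ℕ) : ℕ :=
  Nat.card {p : Nat.Partition m // ∀ x ∈ p.parts, ∃ j : ℕ, x = 2 ^ j}

open Multiset Classical

abbrev P2 (m : ℕ) := {p : Nat.Partition m // ∀ x ∈ p.parts, ∃ j : ℕ, x = 2 ^ j}

/-- Removing a 1: partitions of m+1 containing a part 1 ≃ partitions of m. -/
noncomputable def eraseOneEquiv (m : ℕ) : {p : P2 (m + 1) // 1 ∈ p.1.parts} ≃ P2 m where
  toFun := fun ⟨⟨p, hp⟩, h1⟩ =>
    ⟨⟨p.parts.erase 1, fun hi => p.parts_pos (Multiset.mem_of_mem_erase hi), by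
        have h : (1 ::ₘ p.parts.erase 1).sum = m + 1 := by
          rw [Multiset.cons_erase h1]; exact p.parts_sum
        rw [Multiset.sum_cons] at h
        omega⟩,
      fun x hx => hp x (Multiset.mem_of_mem_erase hx)⟩
  invFun := fun ⟨p, hp⟩ =>
    ⟨⟨⟨1 ::ₘ p.parts, fun hi => by
        rcases Multiset.mem_cons.mp hi with h | h
        · omega
        · exact p.parts_pos h, by simp [p.parts_sum, Nat.add_comm]⟩,
      fun x hx => by
        rcases Multiset.mem_cons.mp hx with h | h
        · exact ⟨0, by simpa using h⟩
        · exact hp x h⟩, Multiset.mem_cons_self 1 _⟩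
  left_inv := fun ⟨⟨p, hp⟩, h1⟩ => by
    apply Subtype.ext; apply Subtype.ext; apply Nat.Partition.ext
    exact Multiset.cons_erase h1
  right_inv := fun ⟨p, hp⟩ => by
    apply Subtype.ext; apply Nat.Partition.ext
    exact Multiset.erase_cons_head 1 _

lemma one_mem_of_odd {k : ℕ} (p : P2 (2 * k + 1)) : 1 ∈ p.1.parts := by
  by_contra h
  have hdvd : 2 ∣ p.1.parts.sum := by
    apply Multiset.dvd_sum
    intro x hx
    obtain ⟨j, rfl⟩ := p.2 x hx
    cases j with
    | zero => exact absurd (by simpa using hx) h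
    | succ j => exact ⟨2 ^ j, by ring⟩
  rw [p.1.parts_sum] at hdvd
  omega

lemma binPartCard_odd (k : ℕ) : binPartCard (2 * k + 1) = binPartCard (2 * k) := by
  unfold binPartCard
  have e : P2 (2 * k + 1) ≃ P2 (2 * k) :=
    (Equiv.subtypeUnivEquiv one_mem_of_odd).symm.trans (eraseOneEquiv (2 * k))
  exact Nat.card_congr e

/-- Doubling: partitions of k ≃ partitions of 2k with no part equal to 1. -/
lemma card_no_one (k : ℕ) :
    Nat.card {p : P2 (2 * k) // 1 ∉ p.1.parts} = binPartCard k := by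
  unfold binPartCard
  symm
  apply Nat.card_congr
  refine Equiv.ofBijective (fun ⟨p, hp⟩ =>
    ⟨⟨⟨p.parts.map (2 * ·), fun hi => by
        obtain ⟨a, ha, rfl⟩ := Multiset.mem_map.mp hi
        have := p.parts_pos ha; omega, by
        rw [Multiset.sum_map_mul_left]
        simp [p.parts_sum]⟩, fun x hx => by
        obtain ⟨a, ha, rfl⟩ := Multiset.mem_map.mp hx
        obtain ⟨j, rfl⟩ := hp a ha
        exact ⟨j + 1, by ring⟩⟩, by
      intro h1
      obtain ⟨a, ha, hae⟩ := Multiset.mem_map.mp h1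
      have := p.parts_pos ha; omega⟩) ⟨?_, ?_⟩
  · rintro ⟨⟨p, hp⟩⟩ ⟨⟨q, hq⟩⟩ h
    simp only [Subtype.mk.injEq, Nat.Partition.mk.injEq] at h
    apply Subtype.ext; apply Nat.Partition.ext
    exact Multiset.map_injective (fun a b => by omega) h
  · rintro ⟨⟨q, hq⟩, h1⟩
    have heven : ∀ x ∈ q.parts, 2 ∣ x := by
      intro x hx
      obtain ⟨j, rfl⟩ := hq x hx
      cases j with
      | zero => exact absurd (by simpa using hx) h1
      | succ j => exact ⟨2 ^ j, by ring⟩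
    have hrepr : (q.parts.map (· / 2)).map (2 * ·) = q.parts := by
      rw [Multiset.map_map]
      rw [show ((2 * ·) ∘ (· / 2) : ℕ → ℕ) = fun x => 2 * (x / 2) from rfl]
      conv_rhs => rw [← Multiset.map_id q.parts]
      apply Multiset.map_congr rfl
      intro x hx
      have := heven x hx
      simp only [id]
      omega
    have hsum : (q.parts.map (· / 2)).sum = k := by
      have : ((q.parts.map (· / 2)).map (2 * ·)).sum = 2 * k := by
        rw [hrepr, q.parts_sum]
      rw [Multiset.sum_map_mul_left] at this
      simp at this
      omega
    have hpos : ∀ {i}, i ∈ q.parts.map (· / 2) → 0 < i := by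
      intro i hi
      obtain ⟨a, ha, rfl⟩ := Multiset.mem_map.mp hi
      obtain ⟨j, rfl⟩ := hq a ha
      cases j with
      | zero => exact absurd (by simpa using ha) h1
      | succ j =>
        rw [pow_succ, Nat.mul_div_cancel _ (by norm_num)]
        positivity
    have hpow : ∀ x ∈ q.parts.map (· / 2), ∃ j : ℕ, x = 2 ^ j := by
      intro x hx
      obtain ⟨a, ha, rfl⟩ := Multiset.mem_map.mp hx
      obtain ⟨j, rfl⟩ := hq a ha
      cases j with
      | zero => exact absurd (by simpa using ha) h1
      | succ j => exact ⟨j, by rw [pow_succ, Nat.mul_div_cancel _ (by norm_num)]⟩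
    refine ⟨⟨⟨q.parts.map (· / 2), hpos, hsum⟩, hpow⟩, ?_⟩
    apply Subtype.ext; apply Subtype.ext; apply Nat.Partition.ext
    exact hrepr


lemma split (m : ℕ) :
    binPartCard m
      = Nat.card {p : P2 m // 1 ∈ p.1.parts} + Nat.card {p : P2 m // 1 ∉ p.1.parts} := by
  classical
  rw [binPartCard, ← Nat.card_sum]
  exact Nat.card_congr (Equiv.sumCompl _).symm

lemma binPartCard_even (k : ℕ) :
    binPartCard (2 * k + 2) = binPartCard (2 * k + 1) + binPartCard (k + 1) := by
  have h1 : Nat.card {p : P2 (2 * k + 1 + 1) // 1 ∈ p.1.parts} = binPartCard (2 * k + 1) :=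
    Nat.card_congr (eraseOneEquiv _)
  have h2 := card_no_one (k + 1)
  have h3 := split (2 * k + 2)
  rw [show 2 * k + 1 + 1 = 2 * k + 2 by ring] at h1
  rw [show 2 * (k + 1) = 2 * k + 2 by ring] at h2
  rw [h3, h1, h2]

end Paper
open Paper in
theorem stmt_14 (n : ℕ) (hn : 1 ≤ n) :
    binPartCard n + ∑ i ∈ Finset.Ico (n / 2 + 1) n, binPartCard i =
      binPartCard (2 * (n - 1)) := by
  induction n, hn using Nat.le_induction with
  | base => simpa using binPartCard_odd 0
  | succ n hn ih =>
    rcases Nat.lt_or_ge n 2 with h2 | h2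
    · interval_cases n
      simp
    · rw [show 2 * (n + 1 - 1) = 2 * n by omega]
      have hr : binPartCard (2 * n) = binPartCard (2 * (n - 1)) + binPartCard n := by
        have he := binPartCard_even (n - 1)
        have ho := binPartCard_odd (n - 1)
        rw [show 2 * (n - 1) + 2 = 2 * n by omega, show n - 1 + 1 = n by omega, ho] at he
        exact he
      rw [hr, ← ih]
      rw [Finset.sum_Ico_succ_top (by omega : (n + 1) / 2 + 1 ≤ n)]
      rcases Nat.even_or_odd n with he | ho
      · obtain ⟨k, hk⟩ := he
        rw [show (n + 1) / 2 = n / 2 by omega,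
          show n + 1 = 2 * (n / 2) + 1 by omega, binPartCard_odd,
          show 2 * (n / 2) = n by omega]
        ring
      · obtain ⟨k, hk⟩ := ho
        rw [Finset.sum_eq_sum_Ico_succ_bot (by omega : n / 2 + 1 < n)]
        rw [show (n + 1) / 2 + 1 = n / 2 + 1 + 1 by omega,
          show n + 1 = 2 * (n / 2) + 2 by omega, binPartCard_even,
          show 2 * (n / 2) + 1 = n by omega, show n / 2 + 1 + 1 = n / 2 + 2 by omega]
        ring
end

section
/- Let H ≠ K_1 be a connected graph. Then lim_{k→∞} R^hom_k(H)^{1/k} = sup_{k≥1} (R^hom_k(H) - 1)^{1/k} = sup{Θ(G) : there is no homomorphism H → complement(G)}, where both sides may be infinite. -/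
namespace Paper

/-- the strong product of a finite family of simple graphs. -/
def strongProdFam {k : ℕ} {W : Fin k → Type} (G : ∀ i, SimpleGraph (W i)) :
    SimpleGraph (∀ i, W i) where
  Adj x y := x ≠ y ∧ ∀ i, x i = y i ∨ (G i).Adj (x i) (y i)
  symm := ⟨fun x y h => ⟨h.1.symm, fun i => (h.2 i).imp Eq.symm (fun h' => h'.symm)⟩⟩
  loopless := ⟨fun x h => h.1 rfl⟩

/-- the spanning subgraph of `K_m` consisting of the edges of color `i`
under the edge coloring `c`. -/
def colorGraph {m k : ℕ} (c : Sym2 (Fin m) → Fin k) (i : Fin k) :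
    SimpleGraph (Fin m) where
  Adj u v := u ≠ v ∧ c s(u, v) = i
  symm := ⟨fun u v h => ⟨h.1.symm, by rw [Sym2.eq_swap]; exact h.2⟩⟩
  loopless := ⟨fun u h => h.1 rfl⟩

/-- the homomorphic graph Ramsey number `R^hom(H₁, …, H_k)`: the least `m` such that
every `k`-edge-coloring of `K_m` admits, for some `i`, a homomorphism from `H i`
into the graph of edges of color `i`. -/
noncomputable def homRamsey {k : ℕ} {V : Fin k → Type} (H : ∀ i, SimpleGraph (V i)) : ℕ :=
  sInf {m | ∀ c : Sym2 (Fin m) → Fin k, ∃ i, Nonempty (H i →g colorGraph c i)}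

end Paper
namespace Paper

/-- the Shannon capacity, valued in `ℝ≥0∞`. -/
noncomputable def shannonCapacityE {V : Type*} (G : SimpleGraph V) : ENNReal :=
  ⨆ m : ℕ+, (indepNum (strongPow G m) : ENNReal) ^ ((m : ℝ))⁻¹

/-- the homomorphic Ramsey number `R^hom_k(H)`, valued in `ℝ≥0∞`
(`⊤` when no `m` works). -/
noncomputable def homRamseyE {V : Type} (H : SimpleGraph V) (k : ℕ) : ENNReal :=
  sInf {x : ENNReal | ∃ m : ℕ, x = m ∧
    ∀ c : Sym2 (Fin m) → Fin k, ∃ i, Nonempty (H →g colorGraph c i)}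

end Paper

open Paper
namespace StmtAux
open Paper

variable {V : Type} [Fintype V] (H : SimpleGraph V)

/-- there is a `k`-coloring of `K_m` with no color class admitting a hom from `H`. -/
def Bad (m k : ℕ) : Prop :=
  ∃ c : Sym2 (Fin m) → Fin k, ∀ i, ¬ Nonempty (H →g colorGraph c i)

def Good (m k : ℕ) : Prop :=
  ∀ c : Sym2 (Fin m) → Fin k, ∃ i, Nonempty (H →g colorGraph c i)

variable {H}

lemma not_good_iff_bad {m k : ℕ} : ¬ Good H m k ↔ Bad H m k := by
  unfold Good Bad; push_neg; simp [not_nonempty_iff, ← not_nonempty_iff]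

lemma exists_adj (hconn : H.Connected) (hV : 2 ≤ Fintype.card V) : ∃ a b, H.Adj a b := by
  obtain ⟨a, b, hab⟩ := Fintype.exists_pair_of_one_lt_card hV
  obtain ⟨w⟩ := (hconn a b)
  cases w with
  | nil => exact absurd rfl hab
  | cons h _ => exact ⟨_, _, h⟩

lemma bad_zero (hV : 2 ≤ Fintype.card V) (k : ℕ) : Bad H 0 k := by
  refine ⟨fun q => isEmptyElim q, fun i ⟨g⟩ => ?_⟩
  obtain ⟨a, _⟩ := Fintype.exists_pair_of_one_lt_card hV
  exact Fin.elim0 (g a)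



lemma bad_one (hE : ∃ a b, H.Adj a b) (k : ℕ) (hk : 1 ≤ k) : Bad H 1 k := by
  refine ⟨fun _ => ⟨0, hk⟩, fun i ⟨g⟩ => ?_⟩
  obtain ⟨a, b, hab⟩ := hE
  exact (g.map_adj hab).1 (Subsingleton.elim _ _)

lemma bad_anti {m m' k : ℕ} (hm : m' ≤ m) (h : Bad H m k) : Bad H m' k := by
  obtain ⟨c, hc⟩ := h
  refine ⟨c ∘ Sym2.map (Fin.castLE hm), fun i ⟨g⟩ => hc i ?_⟩
  refine ⟨⟨fun a => Fin.castLE hm (g a), fun {a b} hab => ?_⟩⟩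
  obtain ⟨h1, h2⟩ := g.map_adj hab
  exact ⟨fun e => h1 (Fin.castLE_injective hm e), h2⟩

lemma bad_mono_colors {m k k' : ℕ} (hE : ∃ a b, H.Adj a b) (hk : k ≤ k') (h : Bad H m k) : Bad H m k' := by
  obtain ⟨c, hc⟩ := h
  refine ⟨fun q => Fin.castLE hk (c q), fun i ⟨g⟩ => ?_⟩
  by_cases hi : ∃ j : Fin k, Fin.castLE hk j = i
  · obtain ⟨j, rfl⟩ := hi
    refine hc j ⟨⟨g, fun {a b} hab => ?_⟩⟩
    obtain ⟨h1, h2⟩ := g.map_adj hab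
    exact ⟨h1, Fin.castLE_injective hk h2⟩
  · obtain ⟨a, b, hab⟩ := hE
    exact hi ⟨c s(g a, g b), (g.map_adj hab).2⟩

lemma bad_mul {m m' k l : ℕ}
    (h1 : Bad H m k) (h2 : Bad H m' l) : Bad H (m * m') (k + l) := by
  obtain ⟨c1, hc1⟩ := h1
  obtain ⟨c2, hc2⟩ := h2
  classical
  set e : Fin m × Fin m' ≃ Fin (m * m') := finProdFinEquiv with he
  set f : Fin (m * m') → Fin (m * m') → Fin (k + l) := fun u v =>
      if (e.symm u).1 = (e.symm v).1
        then finSumFinEquiv (Sum.inr (c2 s((e.symm u).2, (e.symm v).2)))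
        else finSumFinEquiv (Sum.inl (c1 s((e.symm u).1, (e.symm v).1))) with hf
  have hsymm : ∀ u v, f u v = f v u := by
    intro u v
    by_cases h : (e.symm u).1 = (e.symm v).1
    · rw [hf]; simp only [if_pos h, if_pos h.symm, Sym2.eq_swap]
    · rw [hf]; simp only [if_neg h, if_neg (Ne.symm h), Sym2.eq_swap]
  refine ⟨Sym2.lift ⟨f, hsymm⟩, ?_⟩
  rintro i ⟨g⟩
  obtain ⟨j, rfl⟩ : ∃ j, finSumFinEquiv j = i :=
    ⟨finSumFinEquiv.symm i, Equiv.apply_symm_apply _ _⟩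
  cases j with
  | inl j =>
    refine hc1 j ⟨⟨fun a => (e.symm (g a)).1, fun {a b} hab => ?_⟩⟩
    obtain ⟨hne, hcol0⟩ := g.map_adj hab
    have hcol : f (g a) (g b) = finSumFinEquiv (Sum.inl j) := hcol0
    simp only [hf] at hcol
    by_cases h : (e.symm (g a)).1 = (e.symm (g b)).1
    · rw [if_pos h] at hcol
      exact absurd (finSumFinEquiv.injective hcol) (by simp)
    · rw [if_neg h] at hcol
      exact ⟨h, Sum.inl.injEq _ _ ▸ (finSumFinEquiv.injective hcol)⟩
  | inr j =>
    refine hc2 j ⟨⟨fun a => (e.symm (g a)).2, fun {a b} hab => ?_⟩⟩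
    obtain ⟨hne, hcol0⟩ := g.map_adj hab
    have hcol : f (g a) (g b) = finSumFinEquiv (Sum.inr j) := hcol0
    simp only [hf] at hcol
    by_cases h : (e.symm (g a)).1 = (e.symm (g b)).1
    · rw [if_pos h] at hcol
      have h2' := finSumFinEquiv.injective hcol
      have hsnd : (e.symm (g a)).2 ≠ (e.symm (g b)).2 := by
        intro hs
        apply hne
        have : e.symm (g a) = e.symm (g b) := Prod.ext h hs
        exact e.symm.injective this
      exact ⟨hsnd, Sum.inr.injEq _ _ ▸ h2'⟩
    · rw [if_neg h] at hcol
      exact absurd (finSumFinEquiv.injective hcol) (by simp)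

/-- (D): an independent set in a strong power of a graph whose complement admits no
hom from `H` yields a bad coloring. -/
lemma bad_of_indep {W : Type} (G : SimpleGraph W) (hG : ¬ Nonempty (H →g Gᶜ))
    {k m : ℕ} (hk : 0 < k) (s : Finset (Fin k → W)) (hs : IsIndep (strongPow G k) ↑s)
    (hcard : s.card = m) : Bad H m k := by
  classical
  subst hcard
  set w : Fin s.card → (Fin k → W) := fun u => (s.equivFin.symm u : Fin k → W) with hw
  have hwmem : ∀ u, w u ∈ s := fun u => (s.equivFin.symm u).2
  have hwinj : Function.Injective w := fun u v h =>
    s.equivFin.symm.injective (Subtype.coe_injective h)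
  set S : Fin s.card → Fin s.card → Finset (Fin k) := fun u v =>
    Finset.univ.filter (fun i => w u i ≠ w v i ∧ ¬ G.Adj (w u i) (w v i)) with hS
  have hSsymm : ∀ u v, S u v = S v u := by
    intro u v
    simp only [hS]
    apply Finset.filter_congr
    intro i _
    constructor
    · rintro ⟨h1, h2⟩; exact ⟨h1.symm, fun h' => h2 h'.symm⟩
    · rintro ⟨h1, h2⟩; exact ⟨h1.symm, fun h' => h2 h'.symm⟩
  have hSne : ∀ u v, u ≠ v → (S u v).Nonempty := by
    intro u v huv
    have hne : w u ≠ w v := fun h => huv (hwinj h)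
    have hni := hs (w u) (hwmem u) (w v) (hwmem v)
    have h2 : ¬ (∀ i, w u i = w v i ∨ G.Adj (w u i) (w v i)) := fun hall => hni ⟨hne, hall⟩
    push_neg at h2
    obtain ⟨i, hi1, hi2⟩ := h2
    exact ⟨i, Finset.mem_filter.2 ⟨Finset.mem_univ _, hi1, hi2⟩⟩
  have hcsymm : ∀ u v : Fin s.card,
      (if h : (S u v).Nonempty then (S u v).min' h else ⟨0, hk⟩)
        = (if h : (S v u).Nonempty then (S v u).min' h else ⟨0, hk⟩) := by
    intro u v; rw [hSsymm u v]
  set c : Sym2 (Fin s.card) → Fin k :=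
    Sym2.lift ⟨fun u v => if h : (S u v).Nonempty then (S u v).min' h else ⟨0, hk⟩, hcsymm⟩
    with hc
  refine ⟨c, ?_⟩
  rintro i ⟨g⟩
  apply hG
  refine ⟨⟨fun a => w (g a) i, fun {a b} hab => ?_⟩⟩
  obtain ⟨hne, hcol⟩ := g.map_adj hab
  have hSab : (S (g a) (g b)).Nonempty := hSne _ _ hne
  have hval : c s(g a, g b) = (S (g a) (g b)).min' hSab := by
    show (if h : (S (g a) (g b)).Nonempty then (S (g a) (g b)).min' h else ⟨0, hk⟩) = _
    rw [dif_pos hSab]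
  have hmem : i ∈ S (g a) (g b) := by
    have hieq : i = (S (g a) (g b)).min' hSab := hcol.symm.trans hval
    have := Finset.min'_mem _ hSab
    rwa [← hieq] at this
  obtain ⟨-, h1, h2⟩ := Finset.mem_filter.1 hmem
  exact ⟨h1, h2⟩

/-- (E): a bad coloring yields a graph (the join of the complements of the color classes)
whose complement admits no hom from `H`, with a large independent set in its `k`-th power. -/
lemma indep_of_bad (hconn : H.Connected) {m k : ℕ} (hk : 0 < k) (h : Bad H m k) :
    ∃ (W : Type) (_ : Fintype W) (G : SimpleGraph W),
      ¬ Nonempty (H →g Gᶜ) ∧ m ≤ indepNum (strongPow G k) := by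
  obtain ⟨c, hc⟩ := h
  classical
  set J : SimpleGraph (Fin k × Fin m) :=
    { Adj := fun x y => x.1 ≠ y.1 ∨ (x.1 = y.1 ∧ x.2 ≠ y.2 ∧ c s(x.2, y.2) ≠ x.1),
      symm := by
        constructor
        rintro x y (h1 | ⟨he, hs, hcne⟩)
        · exact Or.inl h1.symm
        · refine Or.inr ⟨he.symm, hs.symm, ?_⟩
          rw [Sym2.eq_swap, ← he]; exact hcne
      loopless := by
        constructor
        rintro x (h1 | ⟨_, hs, _⟩)
        · exact h1 rfl
        · exact hs rfl } with hJ
  have hJadj : ∀ x y, J.Adj x y ↔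
      (x.1 ≠ y.1 ∨ (x.1 = y.1 ∧ x.2 ≠ y.2 ∧ c s(x.2, y.2) ≠ x.1)) := fun x y => Iff.rfl
  refine ⟨Fin k × Fin m, inferInstance, J, ?_, ?_⟩
  · rintro ⟨g⟩
    have hedge : ∀ {a b}, H.Adj a b → (g a).1 = (g b).1 := by
      intro a b hab
      have := g.map_adj hab
      rw [SimpleGraph.compl_adj] at this
      obtain ⟨hne, hnadj⟩ := this
      by_contra hne1
      exact hnadj ((hJadj _ _).2 (Or.inl hne1))
    have hwalk : ∀ a b, (p : H.Walk a b) → (g a).1 = (g b).1 := by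
      intro a b p
      induction p with
      | nil => rfl
      | cons h p ih => exact (hedge h).trans ih
    obtain ⟨a0⟩ := hconn.nonempty
    set i0 := (g a0).1 with hi0
    apply hc i0
    refine ⟨⟨fun a => (g a).2, fun {a b} hab => ?_⟩⟩
    have hfst : (g a).1 = (g b).1 := hedge hab
    have hfst0 : (g a).1 = i0 := ((hwalk a0 a (hconn a0 a).some).symm : _)
    have := g.map_adj hab
    rw [SimpleGraph.compl_adj] at this
    obtain ⟨hne, hnadj⟩ := this
    have hsnd : (g a).2 ≠ (g b).2 := by
      intro hs
      exact hne (Prod.ext hfst hs)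
    have hcval : c s((g a).2, (g b).2) = (g a).1 := by
      by_contra hcne
      exact hnadj ((hJadj _ _).2 (Or.inr ⟨hfst, hsnd, hcne⟩))
    exact ⟨hsnd, hcval.trans hfst0⟩
  · set f : Fin m → (Fin k → Fin k × Fin m) := fun v => fun i => (i, v) with hfdef
    have hfinj : Function.Injective f := by
      intro v v' hvv
      have := congrFun hvv ⟨0, hk⟩
      exact (Prod.ext_iff.1 this).2
    set t : Finset (Fin k → Fin k × Fin m) := Finset.univ.image f with ht
    have hcard : t.card = m := by
      rw [ht, Finset.card_image_of_injective _ hfinj, Finset.card_univ, Fintype.card_fin]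
    have hindep : IsIndep (strongPow J k) ↑t := by
      intro x hx y hy hxy
      rw [Finset.mem_coe, ht, Finset.mem_image] at hx hy
      obtain ⟨v, -, rfl⟩ := hx
      obtain ⟨v', -, rfl⟩ := hy
      obtain ⟨hne, hall⟩ := hxy
      have hvne : v ≠ v' := by
        intro hv; exact hne (by rw [hv])
      rcases hall (c s(v, v')) with heq | hadj
      · exact hvne (Prod.ext_iff.1 heq).2
      · rcases (hJadj _ _).1 hadj with h1 | ⟨-, -, hcne⟩
        · exact h1 rfl
        · exact hcne rfl
    have hmem : m ∈ {n | ∃ u : Finset (Fin k → Fin k × Fin m),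
        IsIndep (strongPow J k) ↑u ∧ u.card = n} := ⟨t, hindep, hcard⟩
    have hbdd : BddAbove {n | ∃ u : Finset (Fin k → Fin k × Fin m),
        IsIndep (strongPow J k) ↑u ∧ u.card = n} := by
      refine ⟨Fintype.card (Fin k → Fin k × Fin m), ?_⟩
      rintro n ⟨u, -, rfl⟩
      exact Finset.card_le_univ u
    exact le_csSup hbdd hmem

/-- characterization of `homRamseyE` -/
lemma ram_eq_top {k : ℕ} (h : ∀ m, Bad H m k) : homRamseyE H k = ⊤ := by
  rw [homRamseyE]
  suffices hs : {x : ENNReal | ∃ m : ℕ, x = m ∧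
      ∀ c : Sym2 (Fin m) → Fin k, ∃ i, Nonempty (H →g colorGraph c i)} = ∅ by
    rw [hs, sInf_empty]
  ext x
  simp only [Set.mem_setOf_eq, Set.mem_empty_iff_false, iff_false]
  rintro ⟨m, rfl, hgood⟩
  exact not_good_iff_bad.2 (h m) hgood

lemma good_of_not_bad {m k : ℕ} (h : ¬ Bad H m k) : Good H m k := by
  by_contra hng
  exact h (not_good_iff_bad.1 hng)

lemma ram_char (hV : 2 ≤ Fintype.card V) (k : ℕ) :
    (∀ m, Bad H m k) ∨
    (∃ M : ℕ, 1 ≤ M ∧ homRamseyE H k = M ∧ Bad H (M - 1) k ∧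
      (∀ m, Bad H m k → m < M)) := by
  by_cases hall : ∀ m, Bad H m k
  · exact Or.inl hall
  · push_neg at hall
    obtain ⟨m0, hm0⟩ := hall
    have hne : {n : ℕ | Good H n k}.Nonempty := ⟨m0, good_of_not_bad hm0⟩
    set M := sInf {n : ℕ | Good H n k} with hM
    have hGoodM : Good H M k := Nat.sInf_mem hne
    have hM1 : 1 ≤ M := by
      rcases Nat.eq_zero_or_pos M with h0 | h1
      · exact absurd (h0 ▸ hGoodM) (not_good_iff_bad.2 (bad_zero hV k))
      · exact h1
    have hbadlt : ∀ m, m < M → Bad H m k := by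
      intro m hm
      by_contra hb
      have : M ≤ m := Nat.sInf_le (show m ∈ {n : ℕ | Good H n k} from good_of_not_bad hb)
      omega
    have hltM : ∀ m, Bad H m k → m < M := by
      intro m hm
      by_contra hge
      push_neg at hge
      exact not_good_iff_bad.2 (bad_anti hge hm) hGoodM
    refine Or.inr ⟨M, hM1, ?_, hbadlt _ (by omega), hltM⟩
    apply le_antisymm
    · exact sInf_le ⟨M, rfl, hGoodM⟩
    · refine le_sInf ?_
      rintro x ⟨n, rfl, hgood⟩
      have : M ≤ n := Nat.sInf_le hgood
      exact_mod_cast this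

lemma bad_iff_lt (hV : 2 ≤ Fintype.card V) {m k : ℕ} :
    Bad H m k ↔ (m : ENNReal) < homRamseyE H k := by
  rcases ram_char hV k with hall | ⟨M, hM1, hram, hbad, hlt⟩
  · rw [ram_eq_top hall]
    exact iff_of_true (hall m) (ENNReal.natCast_lt_top m)
  · rw [hram]
    constructor
    · intro hb
      exact_mod_cast hlt m hb
    · intro hlt'
      have hmM : m < M := by exact_mod_cast hlt'
      exact bad_anti (by omega : m ≤ M - 1) hbad

lemma lt_ram_sub_one (hV : 2 ≤ Fintype.card V) {n k : ℕ}
    (h : (n : ENNReal) < homRamseyE H k) : (n : ENNReal) ≤ homRamseyE H k - 1 := by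
  rcases ram_char hV k with hall | ⟨M, hM1, hram, _, _⟩
  · rw [ram_eq_top hall]
    simp
  · rw [hram] at h ⊢
    have hnM : n < M := by exact_mod_cast h
    rw [show (1 : ENNReal) = ((1 : ℕ) : ENNReal) by simp, ← ENNReal.natCast_sub]
    exact_mod_cast Nat.le_sub_one_of_lt hnM

lemma one_le_ram_sub_one (hconn : H.Connected) (hV : 2 ≤ Fintype.card V)
    {k : ℕ} (hk : 1 ≤ k) : 1 ≤ homRamseyE H k - 1 := by
  have hb := bad_one (exists_adj hconn hV) k hk
  have := (bad_iff_lt hV).1 hb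
  have h2 := lt_ram_sub_one hV (n := 1) (by exact_mod_cast this)
  exact_mod_cast h2

lemma ram_sub_mul (hconn : H.Connected) (hV : 2 ≤ Fintype.card V) (k l : ℕ) :
    (homRamseyE H k - 1) * (homRamseyE H l - 1) ≤ homRamseyE H (k + l) - 1 := by
  have hE := exists_adj hconn hV
  rcases ram_char hV k with hall | ⟨M, hM1, hram, hbad, _⟩
  · have : ∀ m, Bad H m (k + l) := fun m =>
      bad_mono_colors hE (Nat.le_add_right k l) (hall m)
    rw [ram_eq_top this]
    simp
  · rcases ram_char hV l with hall' | ⟨N, hN1, hram', hbad', _⟩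
    · have : ∀ m, Bad H m (k + l) := fun m =>
        bad_mono_colors hE (Nat.le_add_left l k) (hall' m)
      rw [ram_eq_top this]
      simp
    · have hmul := bad_mul hbad hbad'
      have hlt := (bad_iff_lt hV).1 hmul
      have hle : (((M - 1) * (N - 1) : ℕ) : ENNReal) ≤ homRamseyE H (k + l) - 1 := by
        exact_mod_cast lt_ram_sub_one hV (by exact_mod_cast hlt)
      rw [hram, hram']
      have h1 : (M : ENNReal) - 1 = ((M - 1 : ℕ) : ENNReal) := by
        rw [ENNReal.natCast_sub]; simp
      have h2 : (N : ENNReal) - 1 = ((N - 1 : ℕ) : ENNReal) := by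
        rw [ENNReal.natCast_sub]; simp
      rw [h1, h2, ← Nat.cast_mul]
      exact hle

lemma indep_attained {W : Type} [Fintype W] (G : SimpleGraph W) (k : ℕ) :
    ∃ u : Finset (Fin k → W), IsIndep (strongPow G k) ↑u ∧
      u.card = indepNum (strongPow G k) := by
  have hne : {n | ∃ u : Finset (Fin k → W), IsIndep (strongPow G k) ↑u ∧
      u.card = n}.Nonempty := ⟨0, ∅, by simp [IsIndep], rfl⟩
  have hbdd : BddAbove {n | ∃ u : Finset (Fin k → W), IsIndep (strongPow G k) ↑u ∧
      u.card = n} := by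
    refine ⟨Fintype.card (Fin k → W), ?_⟩
    rintro n ⟨u, -, rfl⟩
    exact Finset.card_le_univ u
  have := Nat.sSup_mem hne hbdd
  exact this

lemma alpha_le_ram (hV : 2 ≤ Fintype.card V) {W : Type} [Fintype W] (G : SimpleGraph W)
    (hG : ¬ Nonempty (H →g Gᶜ)) {k : ℕ} (hk : 0 < k) :
    (indepNum (strongPow G k) : ENNReal) ≤ homRamseyE H k - 1 := by
  obtain ⟨u, hu1, hu2⟩ := indep_attained G k
  have hb := bad_of_indep G hG hk u hu1 hu2
  exact lt_ram_sub_one hV ((bad_iff_lt hV).1 hb)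

/-- The supremum-of-capacities quantity. -/
noncomputable def capSup (H : SimpleGraph V) : ENNReal :=
  ⨆ (W : Type) (_ : Fintype W) (G : SimpleGraph W)
    (_ : ¬ Nonempty (H →g Gᶜ)), shannonCapacityE G

lemma le_capSup {W : Type} (iW : Fintype W) (G : SimpleGraph W)
    (hG : ¬ Nonempty (H →g Gᶜ)) : shannonCapacityE G ≤ capSup H :=
  le_iSup_of_le W (le_iSup_of_le iW (le_iSup_of_le G (le_iSup_of_le hG le_rfl)))

lemma cap_le_s {W : Type} (iW : Fintype W) (hV : 2 ≤ Fintype.card V) (G : SimpleGraph W)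
    (hG : ¬ Nonempty (H →g Gᶜ)) :
    shannonCapacityE G ≤ ⨆ k : ℕ+, (homRamseyE H k - 1) ^ ((k : ℝ))⁻¹ := by
  refine iSup_le fun m => ?_
  refine le_iSup_of_le m ?_
  exact ENNReal.rpow_le_rpow (alpha_le_ram hV G hG m.pos) (by positivity)

lemma natpow_rpow (n : ℕ) {k : ℕ} (hk : 0 < k) :
    (((n ^ k : ℕ) : ENNReal)) ^ ((k : ℝ))⁻¹ = (n : ENNReal) := by
  push_cast
  rw [← ENNReal.rpow_natCast (n : ENNReal) k, ← ENNReal.rpow_mul,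
    mul_inv_cancel₀ (by exact_mod_cast hk.ne' : (k : ℝ) ≠ 0), ENNReal.rpow_one]

lemma s_le_capSup (hconn : H.Connected) (hV : 2 ≤ Fintype.card V) :
    (⨆ k : ℕ+, (homRamseyE H k - 1) ^ ((k : ℝ))⁻¹) ≤ capSup H := by
  refine iSup_le fun k => ?_
  rcases ram_char hV (k : ℕ) with hall | ⟨M, hM1, hram, hbad, _⟩
  · rw [ram_eq_top hall]
    have htop : ((⊤ : ENNReal) - 1) ^ ((k : ℝ))⁻¹ = ⊤ := by
      rw [show (⊤ : ENNReal) - 1 = ⊤ by simp]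
      exact ENNReal.top_rpow_of_pos (by positivity)
    rw [htop, top_le_iff]
    by_contra hS
    obtain ⟨n, hn⟩ := ENNReal.exists_nat_gt hS
    obtain ⟨W, iW, G, hG, hα⟩ := indep_of_bad hconn k.pos (hall (n ^ (k : ℕ)))
    have h1 : ((n ^ (k : ℕ) : ℕ) : ENNReal) ^ ((k : ℝ))⁻¹ ≤ shannonCapacityE G := by
      refine le_trans (ENNReal.rpow_le_rpow
        ((Nat.cast_le (α := ENNReal)).2 hα) (by positivity)) ?_
      exact le_iSup (fun m : ℕ+ => (indepNum (strongPow G m) : ENNReal) ^ ((m : ℝ))⁻¹) k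
    rw [natpow_rpow n k.pos] at h1
    exact absurd (h1.trans (le_capSup iW G hG)) (not_le.2 hn)
  · rw [hram, show ((M : ℕ) : ENNReal) - 1 = ((M - 1 : ℕ) : ENNReal) by
      rw [ENNReal.natCast_sub]; simp]
    obtain ⟨W, iW, G, hG, hα⟩ := indep_of_bad hconn k.pos hbad
    refine le_trans ?_ (le_capSup iW G hG)
    refine le_trans (ENNReal.rpow_le_rpow
      ((Nat.cast_le (α := ENNReal)).2 hα) (by positivity)) ?_
    exact le_iSup (fun m : ℕ+ => (indepNum (strongPow G m) : ENNReal) ^ ((m : ℝ))⁻¹) k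

lemma cap_eq (hconn : H.Connected) (hV : 2 ≤ Fintype.card V) :
    (⨆ k : ℕ+, (homRamseyE H k - 1) ^ ((k : ℝ))⁻¹) = capSup H := by
  refine le_antisymm (s_le_capSup hconn hV) ?_
  refine iSup_le fun W => iSup_le fun iW => iSup_le fun G => iSup_le fun hG => ?_
  exact cap_le_s iW hV G hG

lemma ram_sub_pow (hconn : H.Connected) (hV : 2 ≤ Fintype.card V) {j : ℕ}
    (q : ℕ) (hq : 1 ≤ q) :
    (homRamseyE H j - 1) ^ q ≤ homRamseyE H (q * j) - 1 := by
  induction q with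
  | zero => omega
  | succ q ih =>
    rcases Nat.eq_zero_or_pos q with h0 | h1
    · subst h0; simp
    · calc (homRamseyE H j - 1) ^ (q + 1)
          = (homRamseyE H j - 1) ^ q * (homRamseyE H j - 1) := pow_succ _ _
        _ ≤ (homRamseyE H (q * j) - 1) * (homRamseyE H j - 1) :=
            mul_le_mul_left (ih h1) _
        _ ≤ homRamseyE H (q * j + j) - 1 := ram_sub_mul hconn hV _ _
        _ = homRamseyE H ((q + 1) * j) - 1 := by ring_nf

lemma ram_sub_div_pow (hconn : H.Connected) (hV : 2 ≤ Fintype.card V) {j k : ℕ}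
    (hj : 1 ≤ j) (hk : j ≤ k) :
    (homRamseyE H j - 1) ^ (k / j) ≤ homRamseyE H k - 1 := by
  have hq1 : 1 ≤ k / j := (Nat.one_le_div_iff (by omega)).2 hk
  have hmod := Nat.div_add_mod k j
  rcases Nat.eq_zero_or_pos (k % j) with h0 | h1
  · have hkeq : (k / j) * j = k := Nat.div_mul_cancel (Nat.dvd_of_mod_eq_zero h0)
    calc (homRamseyE H j - 1) ^ (k / j)
        ≤ homRamseyE H ((k / j) * j) - 1 := ram_sub_pow hconn hV _ hq1
      _ = homRamseyE H k - 1 := by rw [hkeq]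
  · have hkeq : (k / j) * j + k % j = k := Nat.div_add_mod' k j
    calc (homRamseyE H j - 1) ^ (k / j)
        = (homRamseyE H j - 1) ^ (k / j) * 1 := (mul_one _).symm
      _ ≤ (homRamseyE H ((k / j) * j) - 1) * (homRamseyE H (k % j) - 1) :=
          mul_le_mul' (ram_sub_pow hconn hV _ hq1) (one_le_ram_sub_one hconn hV h1)
      _ ≤ homRamseyE H ((k / j) * j + k % j) - 1 := ram_sub_mul hconn hV _ _
      _ = homRamseyE H k - 1 := by rw [hkeq]

lemma one_le_ram (hconn : H.Connected) (hV : 2 ≤ Fintype.card V) {k : ℕ} (hk : 1 ≤ k) :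
    1 ≤ homRamseyE H k :=
  le_trans (one_le_ram_sub_one hconn hV hk) tsub_le_self

open Filter in
lemma main_tendsto (hconn : H.Connected) (hV : 2 ≤ Fintype.card V) :
    Filter.Tendsto (fun k : ℕ => (homRamseyE H k) ^ ((k : ℝ))⁻¹) Filter.atTop
      (nhds (⨆ k : ℕ+, (homRamseyE H k - 1) ^ ((k : ℝ))⁻¹)) := by
  set s := ⨆ k : ℕ+, (homRamseyE H (k:ℕ) - 1) ^ (((k:ℕ) : ℝ))⁻¹ with hsdef
  have hs_ge : ∀ k : ℕ+, (homRamseyE H (k:ℕ) - 1) ^ (((k:ℕ) : ℝ))⁻¹ ≤ s :=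
    fun k => le_iSup (fun k : ℕ+ => (homRamseyE H (k:ℕ) - 1) ^ (((k:ℕ) : ℝ))⁻¹) k
  have hs1 : 1 ≤ s := by
    refine le_trans ?_ (hs_ge 1)
    calc (1:ENNReal) = 1 ^ ((((1:ℕ+):ℕ):ℝ))⁻¹ := (ENNReal.one_rpow _).symm
      _ ≤ _ := ENNReal.rpow_le_rpow (one_le_ram_sub_one hconn hV le_rfl) (by positivity)
  refine tendsto_order.2 ⟨?_, ?_⟩
  · -- lower bound
    intro a ha
    rw [lt_iSup_iff] at ha
    obtain ⟨j, hj⟩ := ha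
    set b := homRamseyE H (j:ℕ) - 1 with hbdef
    have hjpos : 1 ≤ (j:ℕ) := j.pos
    have hb1 : 1 ≤ b := one_le_ram_sub_one hconn hV hjpos
    have hane : a ≠ ⊤ := ne_top_of_lt hj
    by_cases hbtop : b = ⊤
    · filter_upwards [eventually_ge_atTop (j:ℕ)] with k hk
      have hq1 : 1 ≤ k / (j:ℕ) := (Nat.one_le_div_iff j.pos).2 hk
      have h1 : (⊤:ENNReal) ≤ homRamseyE H k := by
        have h2 := ram_sub_div_pow hconn hV (j := (j:ℕ)) hjpos hk
        rw [← hbdef, hbtop] at h2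
        calc (⊤:ENNReal) = ⊤ ^ (k / (j:ℕ)) := (ENNReal.top_pow (by omega)).symm
          _ ≤ homRamseyE H k - 1 := h2
          _ ≤ homRamseyE H k := tsub_le_self
      rw [top_le_iff.1 h1]
      have hkpos : (0:ℝ) < (k:ℝ) := by
        have : 0 < k := lt_of_lt_of_le j.pos hk
        exact_mod_cast this
      calc a < ⊤ := hane.lt_top
        _ = ⊤ ^ ((k:ℝ))⁻¹ := (ENNReal.top_rpow_of_pos (by positivity)).symm
    · by_cases hbone : b = 1
      · filter_upwards [eventually_ge_atTop 1] with k hk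
        have ha1 : a < 1 := by rwa [hbone, ENNReal.one_rpow] at hj
        refine lt_of_lt_of_le ha1 ?_
        calc (1:ENNReal) = 1 ^ ((k:ℝ))⁻¹ := (ENNReal.one_rpow _).symm
          _ ≤ _ := ENNReal.rpow_le_rpow (one_le_ram hconn hV hk) (by positivity)
      · have hblt : 1 < b := lt_of_le_of_ne hb1 (Ne.symm hbone)
        set B := b.toReal with hBdef
        have hB1 : 1 < B := by
          have := (ENNReal.toReal_lt_toReal ENNReal.one_ne_top hbtop).2 hblt
          rwa [ENNReal.toReal_one] at this
        have hBpos : (0:ℝ) < B := lt_trans one_pos hB1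
        have hA : a.toReal < B ^ ((((j:ℕ):ℝ))⁻¹) := by
          have hfin : b ^ ((((j:ℕ):ℝ))⁻¹) ≠ ⊤ :=
            (ENNReal.rpow_lt_top_of_nonneg (by positivity) hbtop).ne
          have := (ENNReal.toReal_lt_toReal hane hfin).2 hj
          rwa [← ENNReal.toReal_rpow] at this
        have hcont : Filter.Tendsto (fun n : ℕ => B ^ (((((j:ℕ):ℝ))⁻¹ - ((n:ℝ))⁻¹)))
            Filter.atTop (nhds (B ^ ((((j:ℕ):ℝ))⁻¹))) := by
          have h2 : Filter.Tendsto (fun n : ℕ => ((((j:ℕ):ℝ))⁻¹ - ((n:ℝ))⁻¹))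
              Filter.atTop (nhds (((((j:ℕ):ℝ))⁻¹ - 0))) :=
            tendsto_const_nhds.sub tendsto_inv_atTop_nhds_zero_nat
          rw [sub_zero] at h2
          have hcontB : Continuous (fun t : ℝ => B ^ t) := by
            have he : (fun t : ℝ => B ^ t) = fun t => Real.exp (Real.log B * t) := by
              funext t; rw [Real.rpow_def_of_pos hBpos]
            rw [he]
            exact Real.continuous_exp.comp (continuous_const.mul continuous_id)
          exact (hcontB.tendsto _).comp h2
        obtain ⟨N, hN⟩ := Filter.eventually_atTop.1 (hcont.eventually_const_lt hA)
        set n0 := max N (2 * (j:ℕ)) with hn0def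
        have hn0 := hN n0 (le_max_left _ _)
        have hn0j : 2 * (j:ℕ) ≤ n0 := le_max_right _ _
        have hn0pos : 0 < n0 := by omega
        have ht0nonneg : 0 ≤ (((j:ℕ):ℝ))⁻¹ - ((n0:ℝ))⁻¹ := by
          have h3 : ((n0:ℝ))⁻¹ ≤ (((j:ℕ):ℝ))⁻¹ := by
            apply inv_anti₀
            · exact_mod_cast j.pos
            · exact_mod_cast by omega
          linarith
        have halt : a < b ^ ((((j:ℕ):ℝ))⁻¹ - ((n0:ℝ))⁻¹) := by
          have hfin : b ^ ((((j:ℕ):ℝ))⁻¹ - ((n0:ℝ))⁻¹) ≠ ⊤ :=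
            (ENNReal.rpow_lt_top_of_nonneg ht0nonneg hbtop).ne
          rw [← ENNReal.toReal_lt_toReal hane hfin, ← ENNReal.toReal_rpow]
          exact hn0
        filter_upwards [eventually_ge_atTop (max (j:ℕ) n0)] with k hk
        have hkj : (j:ℕ) ≤ k := le_trans (le_max_left _ _) hk
        have hkn0 : n0 ≤ k := le_trans (le_max_right _ _) hk
        have hk1 : 1 ≤ k := le_trans hjpos hkj
        set q := k / (j:ℕ) with hqdef
        have hkpos : (0:ℝ) < (k:ℝ) := by exact_mod_cast by omega
        have hjposR : (0:ℝ) < ((j:ℕ):ℝ) := by exact_mod_cast j.pos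
        have hklt : k < q * (j:ℕ) + (j:ℕ) := by
          have hmod := Nat.div_add_mod' k (j:ℕ)
          rw [← hqdef] at hmod
          have hmlt : k % (j:ℕ) < (j:ℕ) := Nat.mod_lt k j.pos
          omega
        have hexp : (((j:ℕ):ℝ))⁻¹ - ((n0:ℝ))⁻¹ ≤ (q:ℝ) * ((k:ℝ))⁻¹ := by
          have h4 : ((k:ℝ))⁻¹ ≤ ((n0:ℝ))⁻¹ := by
            apply inv_anti₀
            · exact_mod_cast hn0pos
            · exact_mod_cast hkn0
          have h5 : (((j:ℕ):ℝ))⁻¹ - ((k:ℝ))⁻¹ ≤ (q:ℝ) * ((k:ℝ))⁻¹ := by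
            rw [inv_eq_one_div, inv_eq_one_div, div_sub_div _ _ hjposR.ne' hkpos.ne',
              mul_one_div, div_le_div_iff₀ (by positivity) hkpos]
            have h6 : (k:ℝ) < (q:ℝ) * ((j:ℕ):ℝ) + ((j:ℕ):ℝ) := by exact_mod_cast hklt
            nlinarith
          linarith
        calc a < b ^ ((((j:ℕ):ℝ))⁻¹ - ((n0:ℝ))⁻¹) := halt
          _ ≤ b ^ ((q:ℝ) * ((k:ℝ))⁻¹) := ENNReal.rpow_le_rpow_of_exponent_le hb1 hexp
          _ = (b ^ (q:ℕ)) ^ ((k:ℝ))⁻¹ := by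
              rw [← ENNReal.rpow_natCast b q, ← ENNReal.rpow_mul]
          _ ≤ (homRamseyE H k - 1) ^ ((k:ℝ))⁻¹ :=
              ENNReal.rpow_le_rpow (ram_sub_div_pow hconn hV hjpos hkj) (by positivity)
          _ ≤ (homRamseyE H k) ^ ((k:ℝ))⁻¹ :=
              ENNReal.rpow_le_rpow tsub_le_self (by positivity)
  · -- upper bound
    intro c hc
    have hstop : s ≠ ⊤ := ne_top_of_lt hc
    have hxk : ∀ k : ℕ, 1 ≤ k →
        homRamseyE H k ^ ((k:ℝ))⁻¹ ≤ (2:ENNReal) ^ ((k:ℝ))⁻¹ * s := by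
      intro k hk
      have hkR : ((k:ℝ)) ≠ 0 := by
        have : (0:ℝ) < (k:ℝ) := by exact_mod_cast hk
        exact this.ne'
      have h1 : (homRamseyE H k - 1) ^ ((k:ℝ))⁻¹ ≤ s := hs_ge ⟨k, hk⟩
      have h2 : homRamseyE H k - 1 ≤ s ^ k := by
        have h3 := ENNReal.rpow_le_rpow h1 (show (0:ℝ) ≤ (k:ℝ) by positivity)
        rwa [← ENNReal.rpow_mul, inv_mul_cancel₀ hkR, ENNReal.rpow_one,
          ENNReal.rpow_natCast] at h3
      have h4 : homRamseyE H k ≤ 2 * s ^ k := by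
        calc homRamseyE H k ≤ (homRamseyE H k - 1) + 1 := le_tsub_add
          _ ≤ s ^ k + 1 := add_le_add_left h2 _
          _ ≤ s ^ k + s ^ k := add_le_add_right (one_le_pow_of_one_le' hs1 k) _
          _ = 2 * s ^ k := (two_mul _).symm
      calc homRamseyE H k ^ ((k:ℝ))⁻¹ ≤ (2 * s ^ k) ^ ((k:ℝ))⁻¹ :=
            ENNReal.rpow_le_rpow h4 (by positivity)
        _ = (2:ENNReal) ^ ((k:ℝ))⁻¹ * (s ^ k) ^ ((k:ℝ))⁻¹ :=
            ENNReal.mul_rpow_of_nonneg _ _ (by positivity)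
        _ = (2:ENNReal) ^ ((k:ℝ))⁻¹ * s := by
            rw [← ENNReal.rpow_natCast s k, ← ENNReal.rpow_mul,
              mul_inv_cancel₀ hkR, ENNReal.rpow_one]
    by_cases hctop : c = ⊤
    · filter_upwards [eventually_ge_atTop 1] with k hk
      rw [hctop]
      refine lt_of_le_of_lt (hxk k hk) ?_
      refine lt_top_iff_ne_top.2 (ENNReal.mul_ne_top ?_ hstop)
      exact (ENNReal.rpow_lt_top_of_nonneg (by positivity) (by simp)).ne
    · set S := s.toReal with hSdef
      set C := c.toReal with hCdef
      have hSC : S < C := (ENNReal.toReal_lt_toReal hstop hctop).2 hc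
      have htend : Filter.Tendsto (fun k : ℕ => (2:ℝ) ^ ((k:ℝ))⁻¹ * S)
          Filter.atTop (nhds S) := by
        have h2 : Filter.Tendsto (fun k : ℕ => ((k:ℝ))⁻¹) Filter.atTop (nhds 0) :=
          tendsto_inv_atTop_nhds_zero_nat
        have hcont2 : Continuous fun t : ℝ => (2:ℝ) ^ t * S := by
          have he : (fun t : ℝ => (2:ℝ) ^ t * S) = fun t => Real.exp (Real.log 2 * t) * S := by
            funext t; rw [Real.rpow_def_of_pos (by norm_num)]
          rw [he]
          exact (Real.continuous_exp.comp (continuous_const.mul continuous_id)).mul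
            continuous_const
        have h3 := (hcont2.tendsto 0).comp h2
        simp only [Function.comp_def] at h3
        have h0 : (2:ℝ) ^ (0:ℝ) * S = S := by rw [Real.rpow_zero, one_mul]
        rwa [h0] at h3
      have hev := htend.eventually_lt_const hSC
      filter_upwards [hev, eventually_ge_atTop 1] with k hevk hk
      refine lt_of_le_of_lt (hxk k hk) ?_
      have hfin : (2:ENNReal) ^ ((k:ℝ))⁻¹ * s ≠ ⊤ :=
        ENNReal.mul_ne_top (ENNReal.rpow_lt_top_of_nonneg (by positivity) (by simp)).ne hstop
      rw [← ENNReal.toReal_lt_toReal hfin hctop]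
      rw [ENNReal.toReal_mul, ← ENNReal.toReal_rpow]
      have h2r : (2:ENNReal).toReal = (2:ℝ) := by simp
      rw [h2r]
      exact hevk

end StmtAux

open Paper in
theorem stmt_18 {V : Type} [Fintype V] (H : SimpleGraph V)
    (hconn : H.Connected) (hV : 2 ≤ Fintype.card V) :
    Filter.Tendsto (fun k : ℕ => (homRamseyE H k) ^ ((k : ℝ))⁻¹) Filter.atTop
      (nhds (⨆ k : ℕ+, (homRamseyE H k - 1) ^ ((k : ℝ))⁻¹)) ∧
    (⨆ k : ℕ+, (homRamseyE H k - 1) ^ ((k : ℝ))⁻¹) =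
      ⨆ (W : Type) (_ : Fintype W) (G : SimpleGraph W)
        (_ : ¬ Nonempty (H →g Gᶜ)), shannonCapacityE G := by
  exact ⟨StmtAux.main_tendsto hconn hV, StmtAux.cap_eq hconn hV⟩
end
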